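/- arXiv:2004.03121 — 6 statements merged into one kernel-verified Lean document; each statement's English description precedes it below -/
import Mathlib

section
/- Let f be μ-strongly convex with L-Lipschitz gradient and minimizer x*, and let X solve the β-High Resolution ODE Ẍ + 2√μ Ẋ + β√s ∇²f(X)Ẋ + (1+√(μs))∇f(X) = 0 with X(0) = x₀ and Ẋ(0) = −2√s∇f(x₀)/(1+√(μs)). Then for any step size 0 < s ≤ 1/L, f(X(t)) − f(x*) ≤ ((3+(2−β)²)/(2s))·‖x₀ − x*‖²·exp(−(√μ/4)t) for all t ≥ 0. -/
open Real Set
open scoped RealInnerProductSpace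

lemma aux_scalar_key (p rs β μ A B C2 I HH V F : ℝ)
    (hp0 : 0 < p) (hrs0 : 0 < rs) (hq1 : p * rs ≤ 1) (hβ0 : 0 ≤ β) (hβ1 : β ≤ 1)
    (hp2 : p ^ 2 = μ)
    (hA : 0 ≤ A) (hB : 0 ≤ B) (hC2 : 0 ≤ C2)
    (hF : F ≤ I - μ / 2 * B) (hI : μ * B ≤ I) (hH : μ * A ≤ HH)
    (hV : V ≤ 3 * A + 12 * μ * B + 3 * β ^ 2 * rs ^ 2 * C2) :
    -(p * A) - β * rs / 2 * HH - (1 + p * rs) * p * I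
      - β * rs * (1 + p * rs) / 2 * C2
      + p / 4 * ((1 + p * rs) * F + 1 / 4 * A + 1 / 4 * V) ≤ 0 := by
  have hμ0 : 0 < μ := hp2 ▸ pow_pos hp0 2
  have s1 := mul_le_mul_of_nonneg_left hF
    (show (0:ℝ) ≤ p * (1 + p * rs) / 4 by positivity)
  have s2 := mul_le_mul_of_nonneg_left hV (show (0:ℝ) ≤ p / 16 by positivity)
  have s3 := mul_le_mul_of_nonneg_left hH (show (0:ℝ) ≤ β * rs / 2 by positivity)
  have s4 := mul_le_mul_of_nonneg_left hI
    (show (0:ℝ) ≤ 3 / 4 * p * (1 + p * rs) by positivity)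
  have X1 : (0:ℝ) ≤ β * rs * C2 * (1 - β * (p * rs)) := by
    apply mul_nonneg (by positivity)
    have : β * (p * rs) ≤ 1 * 1 :=
      mul_le_mul hβ1 hq1 (mul_nonneg hp0.le hrs0.le) zero_le_one
    linarith
  have s5 : 3 * p * β ^ 2 * rs ^ 2 / 16 * C2 ≤ β * rs / 2 * C2 := by
    have h0 : (0:ℝ) ≤ β * rs * C2 := by positivity
    linarith [X1, h0]
  have s6 : (0:ℝ) ≤ β * rs * μ / 2 * A := by positivity
  have s7 : (0:ℝ) ≤ p * μ * B := by positivity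
  have s8 : (0:ℝ) ≤ p * rs * p * μ * B := by positivity
  have s9 : (0:ℝ) ≤ β * rs * (p * rs) / 2 * C2 := by positivity
  have s10 : (0:ℝ) ≤ p * A := by positivity
  linarith [s1, s2, s3, s4, s5, s6, s7, s8, s9, s10]

lemma aux_scalar_E0 (p rs β μ L F0 G0 D0 I0 : ℝ)
    (hp0 : 0 < p) (hrs0 : 0 < rs) (hq1 : p * rs ≤ 1) (hβ0 : 0 ≤ β) (hβ1 : β ≤ 1)
    (hp2 : p ^ 2 = μ) (hL0 : 0 < L) (hsL1 : rs ^ 2 * L ≤ 1)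
    (hD0 : 0 ≤ D0) (hG0n : 0 ≤ G0)
    (hF0 : F0 ≤ L / 2 * D0) (hG0 : G0 ≤ L ^ 2 * D0) (hI0 : μ * D0 ≤ I0) :
    (1 + p * rs) * F0
      + 1 / 4 * ((2 * rs / (1 + p * rs)) ^ 2 * G0)
      + 1 / 4 * ((β * rs - 2 * rs / (1 + p * rs)) ^ 2 * G0
        + 2 * (β * rs - 2 * rs / (1 + p * rs)) * (2 * p) * I0
        + (2 * p) ^ 2 * D0)
      ≤ (1 + p * rs) * ((3 + (2 - β) ^ 2) / (2 * rs ^ 2) * D0) := by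
  have hq0 : 0 < p * rs := mul_pos hp0 hrs0
  have hc0 : (0:ℝ) < 1 + p * rs := by linarith
  have hμ0 : 0 < μ := hp2 ▸ pow_pos hp0 2
  set r := 2 * rs / (1 + p * rs) with hr
  have hrc : r * (1 + p * rs) = 2 * rs := by rw [hr]; field_simp
  have hr1 : rs ≤ r := by
    rw [hr, le_div_iff₀ hc0]
    linarith [mul_le_mul_of_nonneg_left hq1 hrs0.le]
  have hr2 : r ≤ 2 * rs := by
    rw [hr, div_le_iff₀ hc0]
    linarith [mul_nonneg (mul_nonneg hp0.le hrs0.le) hrs0.le]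
  clear_value r
  clear hr
  have hI0' : 0 ≤ I0 := le_trans (by positivity) hI0
  have hbr : β * rs ≤ r := le_trans (mul_le_of_le_one_left hrs0.le hβ1) hr1
  have hcross : 2 * (β * rs - r) * (2 * p) * I0 ≤ 0 := by
    have := mul_nonneg (mul_nonneg (show (0:ℝ) ≤ r - β * rs by linarith) hp0.le) hI0'
    nlinarith [this]
  have h1 : (0:ℝ) ≤ r - β * rs := by linarith
  have h2 : r - β * rs ≤ (2 - β) * rs := by nlinarith [hr2]
  have hsq : (β * rs - r) ^ 2 ≤ (2 - β) ^ 2 * rs ^ 2 := by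
    have h3 := mul_le_mul h2 h2 h1 (mul_nonneg (by linarith : (0:ℝ) ≤ 2 - β) hrs0.le)
    calc (β * rs - r) ^ 2 = (r - β * rs) * (r - β * rs) := by ring
    _ ≤ ((2 - β) * rs) * ((2 - β) * rs) := h3
    _ = (2 - β) ^ 2 * rs ^ 2 := by ring
  have ha0 : (0:ℝ) ≤ rs ^ 2 * L := by positivity
  have ha1 : (rs ^ 2 * L) ^ 2 ≤ 1 := by
    linarith [mul_le_mul hsL1 hsL1 ha0 zero_le_one, sq_nonneg (rs ^ 2 * L)]
  have t1 : 2 * rs ^ 2 * ((1 + p * rs) * F0) ≤ (1 + p * rs) * D0 := by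
    have A1 := mul_le_mul_of_nonneg_left hF0
      (show (0:ℝ) ≤ 2 * rs ^ 2 * (1 + p * rs) by positivity)
    have A2 := mul_le_mul_of_nonneg_right hsL1 (mul_nonneg hc0.le hD0)
    linarith [A1, A2]
  have hrr : r ^ 2 ≤ 4 * rs ^ 2 := by
    linarith [mul_le_mul hr2 hr2 (le_trans hrs0.le hr1) (by positivity : (0:ℝ) ≤ 2 * rs),
      sq_nonneg r]
  have u1a : rs ^ 2 * r ^ 2 * L ^ 2 ≤ 4 := by
    have B1 := mul_le_mul_of_nonneg_left hrr (show (0:ℝ) ≤ rs ^ 2 * L ^ 2 by positivity)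
    linarith [B1, ha1]
  have u1 : 2 * rs ^ 2 * (1 / 4 * (r ^ 2 * G0)) ≤ 2 * D0 := by
    have C1 := mul_le_mul_of_nonneg_left hG0
      (show (0:ℝ) ≤ rs ^ 2 * r ^ 2 / 2 by positivity)
    have C2 := mul_le_mul_of_nonneg_right u1a (show (0:ℝ) ≤ D0 / 2 by positivity)
    linarith [C1, C2]
  have u2 : 2 * rs ^ 2 * p ^ 2 * D0 ≤ 2 * (p * rs) * D0 := by
    have D1 := mul_le_mul_of_nonneg_right hq1 (mul_nonneg hq0.le hD0)
    linarith [D1]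
  have u3 : 2 * rs ^ 2 * (1 / 4 * ((β * rs - r) ^ 2 * G0)) ≤ (2 - β) ^ 2 / 2 * D0 := by
    have E1 := mul_le_mul_of_nonneg_right hsq
      (show (0:ℝ) ≤ rs ^ 2 / 2 * G0 by positivity)
    have E2 := mul_le_mul_of_nonneg_left hG0
      (show (0:ℝ) ≤ (2 - β) ^ 2 * rs ^ 2 * rs ^ 2 / 2 by positivity)
    have E3 := mul_le_mul_of_nonneg_right ha1
      (show (0:ℝ) ≤ (2 - β) ^ 2 * D0 / 2 by positivity)
    linarith [E1, E2, E3]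
  have ucross : 2 * rs ^ 2 * (1 / 4 * (2 * (β * rs - r) * (2 * p) * I0)) ≤ 0 := by
    have := mul_nonpos_of_nonneg_of_nonpos (show (0:ℝ) ≤ rs ^ 2 / 2 by positivity) hcross
    linarith [this]
  have hP : 2 * rs ^ 2 * ((1 + p * rs) * F0 + 1 / 4 * (r ^ 2 * G0)
      + 1 / 4 * ((β * rs - r) ^ 2 * G0 + 2 * (β * rs - r) * (2 * p) * I0
        + (2 * p) ^ 2 * D0))
      ≤ 2 * rs ^ 2 * ((1 + p * rs) * ((3 + (2 - β) ^ 2) / (2 * rs ^ 2) * D0)) := by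
    have hRHS : 2 * rs ^ 2 * ((1 + p * rs) * ((3 + (2 - β) ^ 2) / (2 * rs ^ 2) * D0))
        = (1 + p * rs) * (3 + (2 - β) ^ 2) * D0 := by
      field_simp
    rw [hRHS]
    have hbudget : (0:ℝ) ≤ (1 / 2 + p * rs) * (2 - β) ^ 2 * D0 := by positivity
    linarith [t1, u1, u2, u3, ucross, hbudget]
  exact le_of_mul_le_mul_left hP (by positivity)

lemma aux_scalar_V (x y z V : ℝ) (hV : V ≤ (x + y + z) ^ 2) :
    V ≤ 3 * x ^ 2 + 3 * y ^ 2 + 3 * z ^ 2 := by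
  nlinarith [sq_nonneg (x - y), sq_nonneg (y - z), sq_nonneg (x - z)]


variable {n : ℕ}

local notation "E" => EuclideanSpace ℝ (Fin n)

/-- first-order condition for a convex differentiable function -/
lemma aux_convex_first_order {h : E → ℝ}
    (hc : ConvexOn ℝ univ h) {x y G : E}
    (hG : HasGradientAt h G x) : h x + ⟪G, y - x⟫ ≤ h y := by
  have hA : HasDerivAt (fun θ : ℝ => x + θ • (y - x)) (y - x) 0 := by
    simpa using ((hasDerivAt_id (0:ℝ)).smul_const (y - x)).const_add x
  have hφ : HasDerivAt (fun θ : ℝ => h (x + θ • (y - x))) ⟪G, y - x⟫ 0 := by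
    have hf : HasFDerivAt h (InnerProductSpace.toDual ℝ _ G) (x + (0:ℝ) • (y - x)) := by
      simpa using (hasGradientAt_iff_hasFDerivAt.mp hG)
    have h2 := hf.comp_hasDerivAt 0 hA
    simp at h2
    exact h2
  have hconv : ConvexOn ℝ univ (fun θ : ℝ => h (x + θ • (y - x))) := by
    have := hc.comp_affineMap (AffineMap.lineMap x y : ℝ →ᵃ[ℝ] E)
    have heq : (h ∘ (AffineMap.lineMap x y : ℝ →ᵃ[ℝ] E)) =
        fun θ : ℝ => h (x + θ • (y - x)) := by
      funext θ
      simp [Function.comp, AffineMap.lineMap_apply, add_comm]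
    rw [heq] at this
    exact this.subset (by simp) convex_univ
  have := hconv.le_slope_of_hasDerivAt (mem_univ 0) (mem_univ 1) zero_lt_one hφ
  rw [slope_def_field] at this
  simp only [one_smul, zero_smul, add_zero, sub_zero, div_one] at this
  have h1 : x + (y - x) = y := by abel
  rw [h1] at this
  linarith [this]

/-- gradient of the strongly-convex shift -/
lemma aux_shift_gradient {f : E → ℝ} {g : E → E} (μ : ℝ)
    (hgrad : ∀ x, HasGradientAt f (g x) x) (x : E) :
    HasGradientAt (fun z => f z - μ / 2 * ‖z‖ ^ 2) (g x - μ • x) x := by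
  rw [hasGradientAt_iff_hasFDerivAt]
  have h1 : HasFDerivAt f (InnerProductSpace.toDual ℝ _ (g x)) x :=
    hasGradientAt_iff_hasFDerivAt.mp (hgrad x)
  have h2 : HasFDerivAt (fun z : E => μ / 2 * ‖z‖ ^ 2)
      (InnerProductSpace.toDual ℝ _ (μ • x)) x := by
    have hin : HasFDerivAt (fun z : E => ⟪z, z⟫)
        ((fderivInnerCLM ℝ (x, x)).comp
          ((ContinuousLinearMap.id ℝ E).prod (ContinuousLinearMap.id ℝ E))) x :=
      (hasFDerivAt_id x).inner ℝ (hasFDerivAt_id x)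
    have := hin.const_mul (μ / 2)
    have heq : (fun z : E => μ / 2 * ⟪z, z⟫) = fun z : E => μ / 2 * ‖z‖ ^ 2 := by
      funext z; rw [real_inner_self_eq_norm_sq]
    rw [heq] at this
    refine HasFDerivAt.congr_fderiv this ?_
    symm
    apply ContinuousLinearMap.ext
    intro v
    simp [fderivInnerCLM, InnerProductSpace.toDual_apply_apply, real_inner_smul_left,
      real_inner_comm x v]
    ring
  have := h1.sub h2
  rw [map_sub]
  exact this

/-- strong convexity lower bound -/
lemma aux_flower {f : E → ℝ} {g : E → E} {μ : ℝ}
    (hsc : ConvexOn ℝ univ (fun x => f x - μ / 2 * ‖x‖ ^ 2))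
    (hgrad : ∀ x, HasGradientAt f (g x) x) (x y : E) :
    f x + ⟪g x, y - x⟫ + μ / 2 * ‖y - x‖ ^ 2 ≤ f y := by
  have := aux_convex_first_order hsc (aux_shift_gradient μ hgrad x) (y := y)
  have hex : ⟪g x - μ • x, y - x⟫ = ⟪g x, y - x⟫ - μ * ⟪x, y - x⟫ := by
    rw [inner_sub_left, real_inner_smul_left]
  have hn : ‖y - x‖ ^ 2 = ‖y‖ ^ 2 - 2 * ⟪x, y⟫ + ‖x‖ ^ 2 := by
    rw [← real_inner_self_eq_norm_sq, ← real_inner_self_eq_norm_sq,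
      ← real_inner_self_eq_norm_sq]
    rw [inner_sub_left, inner_sub_right, inner_sub_right, real_inner_comm y x]
    ring
  have hx2 : ⟪x, y - x⟫ = ⟪x, y⟫ - ‖x‖ ^ 2 := by
    rw [inner_sub_right, real_inner_self_eq_norm_sq]
  rw [hex, hx2] at this
  rw [hn]
  nlinarith [this]

/-- strong monotonicity of the gradient -/
lemma aux_smono {f : E → ℝ} {g : E → E} {μ : ℝ}
    (hsc : ConvexOn ℝ univ (fun x => f x - μ / 2 * ‖x‖ ^ 2))
    (hgrad : ∀ x, HasGradientAt f (g x) x) (x y : E) :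
    μ * ‖x - y‖ ^ 2 ≤ ⟪g x - g y, x - y⟫ := by
  have h1 := aux_flower hsc hgrad x y
  have h2 := aux_flower hsc hgrad y x
  have hs : ⟪g x - g y, x - y⟫ = ⟪g x, x - y⟫ - ⟪g y, x - y⟫ := inner_sub_left _ _ _
  have h3 : ⟪g x, y - x⟫ = -⟪g x, x - y⟫ := by
    rw [show y - x = -(x - y) by abel, inner_neg_right]
  have h4 : ⟪g y, x - y⟫ = ⟪g y, x - y⟫ := rfl
  have h5 : ‖y - x‖ = ‖x - y‖ := by rw [show y - x = -(x - y) by abel, norm_neg]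
  rw [hs]
  rw [h3, h5] at h1
  nlinarith [h1, h2]

/-- curve derivative helper -/
lemma aux_line_deriv (x v : E) (τ : ℝ) :
    HasDerivAt (fun θ : ℝ => x + θ • v) v τ := by
  simpa using ((hasDerivAt_id τ).smul_const v).const_add x

/-- composition of gradient along a curve -/
lemma aux_comp_grad {f : E → ℝ} {g : E → E}
    (hgrad : ∀ x, HasGradientAt f (g x) x)
    {Y : ℝ → E} {Y' : E} {t : ℝ} (hY : HasDerivAt Y Y' t) :
    HasDerivAt (fun τ => f (Y τ)) ⟪g (Y t), Y'⟫ t := by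
  have hf : HasFDerivAt f (InnerProductSpace.toDual ℝ _ (g (Y t))) (Y t) :=
    hasGradientAt_iff_hasFDerivAt.mp (hgrad (Y t))
  have h2 := hf.comp_hasDerivAt t hY
  simp at h2
  exact h2

/-- descent lemma: smoothness upper bound -/
lemma aux_fupper {f : E → ℝ} {g : E → E} {L : ℝ} (hL : 0 < L)
    (hgrad : ∀ x, HasGradientAt f (g x) x)
    (hLip : LipschitzWith (Real.toNNReal L) g) (x y : E) :
    f y ≤ f x + ⟪g x, y - x⟫ + L / 2 * ‖y - x‖ ^ 2 := by
  set d := y - x with hd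
  set ψ : ℝ → ℝ := fun θ => f (x + θ • d) - θ * ⟪g x, d⟫ - L * θ ^ 2 / 2 * ‖d‖ ^ 2
    with hψdef
  have hψ : ∀ θ : ℝ, HasDerivAt ψ
      (⟪g (x + θ • d), d⟫ - ⟪g x, d⟫ - L * θ * ‖d‖ ^ 2) θ := by
    intro θ
    have h1 : HasDerivAt (fun θ : ℝ => f (x + θ • d)) ⟪g (x + θ • d), d⟫ θ :=
      aux_comp_grad hgrad (aux_line_deriv x d θ)
    have h2 : HasDerivAt (fun θ : ℝ => θ * ⟪g x, d⟫) ⟪g x, d⟫ θ := by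
      simpa using (hasDerivAt_id θ).mul_const ⟪g x, d⟫
    have h3 : HasDerivAt (fun θ : ℝ => L * θ ^ 2 / 2 * ‖d‖ ^ 2)
        (L * θ * ‖d‖ ^ 2) θ := by
      have := ((hasDerivAt_pow 2 θ).const_mul L).div_const 2
      have := this.mul_const (‖d‖ ^ 2)
      exact this.congr_deriv (by ring)
    exact (h1.sub h2).sub h3
  have hmono : AntitoneOn ψ (Icc (0:ℝ) 1) := by
    apply antitoneOn_of_deriv_nonpos (convex_Icc 0 1)
    · exact fun θ _ => ((hψ θ).continuousAt).continuousWithinAt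
    · intro θ _
      exact ((hψ θ).differentiableAt).differentiableWithinAt
    · intro θ hθ
      rw [interior_Icc] at hθ
      rw [(hψ θ).deriv]
      have hdist : ‖g (x + θ • d) - g x‖ ≤ L * (θ * ‖d‖) := by
        have := hLip.dist_le_mul (x + θ • d) x
        rw [Real.coe_toNNReal L hL.le, dist_eq_norm, dist_eq_norm] at this
        simpa [norm_smul, abs_of_pos hθ.1] using this
      have hcs : ⟪g (x + θ • d) - g x, d⟫ ≤ ‖g (x + θ • d) - g x‖ * ‖d‖ :=
        real_inner_le_norm _ _
      have hsub : ⟪g (x + θ • d) - g x, d⟫ = ⟪g (x + θ • d), d⟫ - ⟪g x, d⟫ :=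
        inner_sub_left _ _ _
      nlinarith [norm_nonneg d, hθ.1.le]
  have := hmono (left_mem_Icc.mpr zero_le_one) (right_mem_Icc.mpr zero_le_one)
    zero_le_one
  simp only [hψdef, one_smul, zero_smul, add_zero, one_pow] at this
  have h1 : x + d = y := by rw [hd]; abel
  rw [h1] at this
  ring_nf at this ⊢
  linarith [this]

/-- Hessian lower bound -/
lemma aux_hess {g : E → E} {Hess : E → E →L[ℝ] E} {μ : ℝ}
    (hHess : ∀ x, HasFDerivAt g (Hess x) x)
    (hm : ∀ a b : E, μ * ‖a - b‖ ^ 2 ≤ ⟪g a - g b, a - b⟫) (x v : E) :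
    μ * ‖v‖ ^ 2 ≤ ⟪Hess x v, v⟫ := by
  set φ : ℝ → ℝ := fun θ => ⟪g (x + θ • v), v⟫ with hφdef
  have hgc : HasDerivAt (fun θ : ℝ => g (x + θ • v)) (Hess x v) 0 := by
    have hf : HasFDerivAt g (Hess x) (x + (0:ℝ) • v) := by simpa using hHess x
    have h2 := hf.comp_hasDerivAt 0 (aux_line_deriv x v 0)
    exact h2
  have hφ : HasDerivAt φ ⟪Hess x v, v⟫ 0 := by
    have := hgc.inner ℝ (hasDerivAt_const (0:ℝ) v)
    simp at this
    exact this
  have htend := hasDerivAt_iff_tendsto_slope.mp hφ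
  have htend' : Filter.Tendsto (slope φ 0) (nhdsWithin 0 (Ioi 0)) (nhds ⟪Hess x v, v⟫) :=
    htend.mono_left (nhdsWithin_mono 0 (fun a ha => ne_of_gt ha))
  refine ge_of_tendsto htend' ?_
  filter_upwards [self_mem_nhdsWithin] with θ hθ
  have hθ0 : (0:ℝ) < θ := hθ
  rw [slope_def_field]
  have hmono := hm (x + θ • v) x
  have h1 : x + θ • v - x = θ • v := by abel
  rw [h1] at hmono
  have h2 : ⟪g (x + θ • v) - g x, θ • v⟫ = θ * ⟪g (x + θ • v) - g x, v⟫ :=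
    real_inner_smul_right _ _ _
  have h3 : ‖θ • v‖ ^ 2 = θ ^ 2 * ‖v‖ ^ 2 := by
    rw [norm_smul]; simp [abs_of_pos hθ0]; ring
  rw [h2, h3] at hmono
  have h4 : φ θ - φ 0 = ⟪g (x + θ • v) - g x, v⟫ := by
    simp only [hφdef]
    rw [← inner_sub_left]
    congr 2
    simp
  rw [h4, sub_zero, le_div_iff₀ hθ0]
  nlinarith [hmono, hθ0]


set_option maxHeartbeats 1000000 in
theorem continuous_convergence_rate {n : ℕ}
    (f : EuclideanSpace ℝ (Fin n) → ℝ)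
    (g : EuclideanSpace ℝ (Fin n) → EuclideanSpace ℝ (Fin n))
    (Hess : EuclideanSpace ℝ (Fin n) → EuclideanSpace ℝ (Fin n) →L[ℝ] EuclideanSpace ℝ (Fin n))
    (μ L s β : ℝ) (hμ : 0 < μ) (hμL : μ ≤ L) (hs : 0 < s) (hsL : s ≤ 1 / L)
    (hβ0 : 0 ≤ β) (hβ1 : β ≤ 1)
    (hgrad : ∀ x, HasGradientAt f (g x) x)
    (hHess : ∀ x, HasFDerivAt g (Hess x) x)
    (hLip : LipschitzWith (Real.toNNReal L) g)
    (hsc : ConvexOn ℝ univ (fun x => f x - μ / 2 * ‖x‖ ^ 2))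
    (xs : EuclideanSpace ℝ (Fin n)) (hmin : IsMinOn f univ xs)
    (x₀ : EuclideanSpace ℝ (Fin n))
    (X X' X'' : ℝ → EuclideanSpace ℝ (Fin n))
    (hX : ∀ t, HasDerivAt X (X' t) t) (hX' : ∀ t, HasDerivAt X' (X'' t) t)
    (hODE : ∀ t, X'' t + (2 * Real.sqrt μ) • X' t
      + (β * Real.sqrt s) • Hess (X t) (X' t)
      + (1 + Real.sqrt (μ * s)) • g (X t) = 0)
    (hinit : X 0 = x₀)
    (hinit' : X' 0 = -(2 * Real.sqrt s / (1 + Real.sqrt (μ * s))) • g x₀) :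
    ∀ t ≥ (0:ℝ), f (X t) - f xs ≤
      (3 + (2 - β) ^ 2) / (2 * s) * ‖x₀ - xs‖ ^ 2
        * Real.exp (-(Real.sqrt μ / 4) * t) := by
  have hL0 : 0 < L := lt_of_lt_of_le hμ hμL
  set p := Real.sqrt μ with hpdef
  set rs := Real.sqrt s with hrsdef
  have hp0 : 0 < p := Real.sqrt_pos.mpr hμ
  have hrs0 : 0 < rs := Real.sqrt_pos.mpr hs
  have hp2 : p ^ 2 = μ := Real.sq_sqrt hμ.le
  have hrs2 : rs ^ 2 = s := Real.sq_sqrt hs.le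
  have hqeq : Real.sqrt (μ * s) = p * rs := Real.sqrt_mul hμ.le s
  have hsL1 : s * L ≤ 1 := by
    rw [div_eq_mul_inv, one_mul] at hsL
    calc s * L ≤ L⁻¹ * L := by nlinarith
    _ = 1 := inv_mul_cancel₀ hL0.ne'
  have hq1 : p * rs ≤ 1 := by
    rw [← hqeq]
    exact Real.sqrt_le_one.mpr (by nlinarith)
  set c := 1 + p * rs with hcdef
  have hc1 : 1 ≤ c := by nlinarith
  have hc2 : c ≤ 2 := by nlinarith
  have hc0 : 0 < c := by linarith
  -- analytic facts
  have hmono := aux_smono hsc hgrad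
  have hflow := aux_flower hsc hgrad
  have hup := aux_fupper hL0 hgrad hLip
  have hhess := aux_hess hHess hmono
  -- gradient vanishes at the minimizer
  have hgxs : g xs = 0 := by
    have h1 := hup xs (xs - (1 / L) • g xs)
    have hminy : f xs ≤ f (xs - (1 / L) • g xs) :=
      (isMinOn_univ_iff.mp hmin) _
    have h2 : (xs - (1 / L) • g xs) - xs = -((1 / L) • g xs) := by abel
    rw [h2] at h1
    rw [inner_neg_right, real_inner_smul_right, real_inner_self_eq_norm_sq,
      norm_neg, norm_smul] at h1
    simp only [Real.norm_eq_abs] at h1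
    have h3 : |1 / L| = 1 / L := abs_of_pos (by positivity)
    rw [h3, mul_pow] at h1
    have hkey : L / 2 * ((1 / L) ^ 2 * ‖g xs‖ ^ 2) = 1 / (2 * L) * ‖g xs‖ ^ 2 := by
      field_simp
    rw [hkey] at h1
    have h4 : (0:ℝ) ≤ -(1 / L * ‖g xs‖ ^ 2) + 1 / (2 * L) * ‖g xs‖ ^ 2 := by
      linarith
    have hkey2 : -(1 / L * ‖g xs‖ ^ 2) + 1 / (2 * L) * ‖g xs‖ ^ 2
        = -(1 / (2 * L)) * ‖g xs‖ ^ 2 := by field_simp; ring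
    rw [hkey2] at h4
    have hu : (0:ℝ) < 1 / (2 * L) := by positivity
    have h5 : ‖g xs‖ ^ 2 ≤ 0 := by
      have hh : 1 / (2 * L) * ‖g xs‖ ^ 2 ≤ 1 / (2 * L) * 0 := by linarith
      exact (mul_le_mul_iff_right₀ hu).mp hh
    have h6 : ‖g xs‖ ^ 2 = 0 := le_antisymm h5 (sq_nonneg _)
    exact norm_eq_zero.mp ((pow_eq_zero_iff two_ne_zero).mp h6)
  -- ODE in rearranged form
  rw [hqeq] at hODE hinit'
  have hODE' : ∀ t, X'' t = -((2 * p) • X' t) - (β * rs) • Hess (X t) (X' t)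
      - c • g (X t) := by
    intro t
    have h := hODE t
    rw [hcdef]
    have : X'' t + ((2 * p) • X' t + ((β * rs) • (Hess (X t)) (X' t)
        + (1 + p * rs) • g (X t))) = 0 := by
      rw [← h]; abel
    have h2 := eq_neg_of_add_eq_zero_left this
    rw [h2]; abel
  -- auxiliary curve
  set v : ℝ → EuclideanSpace ℝ (Fin n) := fun t =>
    X' t + (2 * p) • (X t - xs) + (β * rs) • g (X t) with hvdef
  have hgc : ∀ t, HasDerivAt (fun τ => g (X τ)) (Hess (X t) (X' t)) t := by
    intro t
    exact (hHess (X t)).comp_hasDerivAt t (hX t)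
  have hv : ∀ t, HasDerivAt v (-(c • g (X t))) t := by
    intro t
    have h1 := ((hX' t).add (((hX t).sub_const xs).const_smul (2 * p))).add
      ((hgc t).const_smul (β * rs))
    have h2 : X'' t + (2 * p) • X' t + (β * rs) • Hess (X t) (X' t)
        = -(c • g (X t)) := by
      rw [hODE' t]; abel
    rw [← h2]
    exact h1
  -- the energy functional and its derivative
  set En : ℝ → ℝ := fun t => c * (f (X t) - f xs)
    + (1 / 4) * ⟪X' t, X' t⟫ + (1 / 4) * ⟪v t, v t⟫ with hEndef
  set Ed : ℝ → ℝ := fun t => c * ⟪g (X t), X' t⟫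
    + (1 / 4) * (⟪X' t, X'' t⟫ + ⟪X'' t, X' t⟫)
    + (1 / 4) * (⟪v t, -(c • g (X t))⟫ + ⟪-(c • g (X t)), v t⟫) with hEddef
  have hEd : ∀ t, HasDerivAt En (Ed t) t := by
    intro t
    have h1 : HasDerivAt (fun τ => c * (f (X τ) - f xs)) (c * ⟪g (X t), X' t⟫) t :=
      ((aux_comp_grad hgrad (hX t)).sub_const (f xs)).const_mul c
    have h2 : HasDerivAt (fun τ => (1 / 4 : ℝ) * ⟪X' τ, X' τ⟫)
        ((1 / 4) * (⟪X' t, X'' t⟫ + ⟪X'' t, X' t⟫)) t :=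
      ((hX' t).inner ℝ (hX' t)).const_mul (1 / 4)
    have h3 : HasDerivAt (fun τ => (1 / 4 : ℝ) * ⟪v τ, v τ⟫)
        ((1 / 4) * (⟪v t, -(c • g (X t))⟫ + ⟪-(c • g (X t)), v t⟫)) t :=
      ((hv t).inner ℝ (hv t)).const_mul (1 / 4)
    exact (h1.add h2).add h3
  -- key differential inequality
  have hkey : ∀ t, Ed t + p / 4 * En t ≤ 0 := by
    intro t
    have e1 : ⟪X' t, X'' t⟫ = -(2 * p * ⟪X' t, X' t⟫)
        - β * rs * ⟪X' t, Hess (X t) (X' t)⟫ - c * ⟪X' t, g (X t)⟫ := by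
      rw [hODE' t]
      simp only [inner_sub_right, inner_neg_right, real_inner_smul_right]
      try ring
    have e2 : ⟪X'' t, X' t⟫ = -(2 * p * ⟪X' t, X' t⟫)
        - β * rs * ⟪X' t, Hess (X t) (X' t)⟫ - c * ⟪X' t, g (X t)⟫ := by
      rw [real_inner_comm]; exact e1
    have e3 : ⟪v t, -(c • g (X t))⟫ = -(c * ⟪X' t, g (X t)⟫)
        - 2 * p * c * ⟪g (X t), X t - xs⟫ - β * rs * c * ⟪g (X t), g (X t)⟫ := by
      simp only [hvdef, inner_neg_right, inner_add_left, real_inner_smul_right,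
        real_inner_smul_left]
      rw [real_inner_comm (X t - xs) (g (X t))]
      ring
    have e4 : ⟪-(c • g (X t)), v t⟫ = -(c * ⟪X' t, g (X t)⟫)
        - 2 * p * c * ⟪g (X t), X t - xs⟫ - β * rs * c * ⟪g (X t), g (X t)⟫ := by
      rw [real_inner_comm]; exact e3
    have hEdt : Ed t = -(p * ⟪X' t, X' t⟫)
        - β * rs / 2 * ⟪X' t, Hess (X t) (X' t)⟫
        - c * p * ⟪g (X t), X t - xs⟫
        - β * rs * c / 2 * ⟪g (X t), g (X t)⟫ := by
      simp only [hEddef]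
      rw [e1, e2, e3, e4, real_inner_comm (g (X t)) (X' t)]
      ring
    -- scalar abbreviations and analytic facts
    have hW : ⟪X' t, X' t⟫ = ‖X' t‖ ^ 2 := real_inner_self_eq_norm_sq _
    have hG2 : ⟪g (X t), g (X t)⟫ = ‖g (X t)‖ ^ 2 := real_inner_self_eq_norm_sq _
    have hF : f (X t) - f xs ≤ ⟪g (X t), X t - xs⟫ - μ / 2 * ‖X t - xs‖ ^ 2 := by
      have h := hflow (X t) xs
      rw [show xs - X t = -(X t - xs) by abel, inner_neg_right, norm_neg] at h
      linarith
    have hI : μ * ‖X t - xs‖ ^ 2 ≤ ⟪g (X t), X t - xs⟫ := by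
      have h := hmono (X t) xs
      rw [hgxs, sub_zero] at h
      exact h
    have hH : μ * ‖X' t‖ ^ 2 ≤ ⟪X' t, Hess (X t) (X' t)⟫ := by
      rw [real_inner_comm]
      exact hhess (X t) (X' t)
    have hA : (0:ℝ) ≤ ‖X' t‖ ^ 2 := sq_nonneg _
    have hB : (0:ℝ) ≤ ‖X t - xs‖ ^ 2 := sq_nonneg _
    have hC2 : (0:ℝ) ≤ ‖g (X t)‖ ^ 2 := sq_nonneg _
    have hVb : ⟪v t, v t⟫ ≤ 3 * ‖X' t‖ ^ 2 + 12 * μ * ‖X t - xs‖ ^ 2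
        + 3 * β ^ 2 * rs ^ 2 * ‖g (X t)‖ ^ 2 := by
      have hn : ‖v t‖ ≤ ‖X' t‖ + 2 * p * ‖X t - xs‖ + β * rs * ‖g (X t)‖ := by
        simp only [hvdef]
        refine (norm_add₃_le).trans ?_
        rw [norm_smul, norm_smul]
        simp only [Real.norm_eq_abs]
        rw [abs_of_pos (by positivity : (0:ℝ) < 2 * p),
          abs_of_nonneg (by positivity : (0:ℝ) ≤ β * rs)]
      have hVn : ⟪v t, v t⟫ = ‖v t‖ ^ 2 := real_inner_self_eq_norm_sq _
      rw [hVn]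
      have hsq2 : ‖v t‖ ^ 2 ≤ (‖X' t‖ + 2 * p * ‖X t - xs‖ + β * rs * ‖g (X t)‖) ^ 2 :=
        pow_le_pow_left₀ (norm_nonneg _) hn 2
      have h4 := aux_scalar_V ‖X' t‖ (2 * p * ‖X t - xs‖) (β * rs * ‖g (X t)‖)
        (‖v t‖ ^ 2) hsq2
      calc ‖v t‖ ^ 2 ≤ 3 * ‖X' t‖ ^ 2 + 3 * (2 * p * ‖X t - xs‖) ^ 2
          + 3 * (β * rs * ‖g (X t)‖) ^ 2 := h4
      _ = 3 * ‖X' t‖ ^ 2 + 12 * p ^ 2 * ‖X t - xs‖ ^ 2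
          + 3 * β ^ 2 * rs ^ 2 * ‖g (X t)‖ ^ 2 := by ring
      _ = 3 * ‖X' t‖ ^ 2 + 12 * μ * ‖X t - xs‖ ^ 2
          + 3 * β ^ 2 * rs ^ 2 * ‖g (X t)‖ ^ 2 := by rw [hp2]
    -- assemble via the scalar inequality
    have hscal := aux_scalar_key p rs β μ (‖X' t‖ ^ 2) (‖X t - xs‖ ^ 2)
      (‖g (X t)‖ ^ 2) ⟪g (X t), X t - xs⟫ ⟪X' t, Hess (X t) (X' t)⟫
      ⟪v t, v t⟫ (f (X t) - f xs)
      hp0 hrs0 hq1 hβ0 hβ1 hp2 hA hB hC2 hF hI hH hVb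
    have heq : Ed t + p / 4 * En t
        = -(p * ‖X' t‖ ^ 2) - β * rs / 2 * ⟪X' t, Hess (X t) (X' t)⟫
          - (1 + p * rs) * p * ⟪g (X t), X t - xs⟫
          - β * rs * (1 + p * rs) / 2 * ‖g (X t)‖ ^ 2
          + p / 4 * ((1 + p * rs) * (f (X t) - f xs)
            + 1 / 4 * ‖X' t‖ ^ 2 + 1 / 4 * ⟪v t, v t⟫) := by
      simp only [hEndef]
      rw [hEdt, hW, hG2, hcdef]
    rw [heq]
    exact hscal
  -- Gronwall argument
  have hEexp : ∀ t, HasDerivAt (fun τ => En τ * Real.exp (p / 4 * τ))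
      ((Ed t + p / 4 * En t) * Real.exp (p / 4 * t)) t := by
    intro t
    have hexp : HasDerivAt (fun τ : ℝ => Real.exp (p / 4 * τ))
        (Real.exp (p / 4 * t) * (p / 4)) t := by
      simpa using ((hasDerivAt_id t).const_mul (p / 4)).exp
    have h := (hEd t).mul hexp
    exact h.congr_deriv (by ring)
  have hanti : Antitone (fun τ => En τ * Real.exp (p / 4 * τ)) := by
    apply antitone_of_deriv_nonpos
    · exact fun t => (hEexp t).differentiableAt
    · intro t
      rw [(hEexp t).deriv]
      exact mul_nonpos_of_nonpos_of_nonneg (hkey t) (Real.exp_nonneg _)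
  have hdecay : ∀ t, 0 ≤ t → En t ≤ En 0 * Real.exp (-(p / 4) * t) := by
    intro t ht
    have h1 := hanti ht
    simp only [mul_zero, Real.exp_zero, mul_one] at h1
    have h2 : En t = En t * Real.exp (p / 4 * t) * Real.exp (-(p / 4) * t) := by
      rw [mul_assoc, ← Real.exp_add, show p / 4 * t + -(p / 4) * t = 0 by ring,
        Real.exp_zero, mul_one]
    rw [h2]
    exact mul_le_mul_of_nonneg_right h1 (Real.exp_nonneg _)
  -- energy dominates the function gap
  have hEnlow : ∀ t, c * (f (X t) - f xs) ≤ En t := by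
    intro t
    simp only [hEndef]
    have h1 : (0:ℝ) ≤ ⟪X' t, X' t⟫ := real_inner_self_nonneg
    have h2 : (0:ℝ) ≤ ⟪v t, v t⟫ := real_inner_self_nonneg
    linarith
  -- initial energy bound
  have hD0 : (0:ℝ) ≤ ‖x₀ - xs‖ ^ 2 := sq_nonneg _
  have hG0n : (0:ℝ) ≤ ‖g x₀‖ ^ 2 := sq_nonneg _
  have hF0 : f x₀ - f xs ≤ L / 2 * ‖x₀ - xs‖ ^ 2 := by
    have h := hup xs x₀
    rw [hgxs, inner_zero_left] at h
    linarith
  have hg1 : ‖g x₀‖ ≤ L * ‖x₀ - xs‖ := by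
    have h := hLip.dist_le_mul x₀ xs
    rw [Real.coe_toNNReal L hL0.le, dist_eq_norm, dist_eq_norm, hgxs, sub_zero] at h
    exact h
  have hG0 : ‖g x₀‖ ^ 2 ≤ L ^ 2 * ‖x₀ - xs‖ ^ 2 := by
    calc ‖g x₀‖ ^ 2 ≤ (L * ‖x₀ - xs‖) ^ 2 := pow_le_pow_left₀ (norm_nonneg _) hg1 2
    _ = L ^ 2 * ‖x₀ - xs‖ ^ 2 := by ring
  have hI0 : μ * ‖x₀ - xs‖ ^ 2 ≤ ⟪g x₀, x₀ - xs⟫ := by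
    have h := hmono x₀ xs
    rw [hgxs, sub_zero] at h
    exact h
  have hsL1' : rs ^ 2 * L ≤ 1 := by rw [hrs2]; exact hsL1
  have i1 : ⟪X' 0, X' 0⟫ = (2 * rs / (1 + p * rs)) ^ 2 * ‖g x₀‖ ^ 2 := by
    rw [hinit', real_inner_smul_left, real_inner_smul_right,
      real_inner_self_eq_norm_sq]
    ring
  have hv0 : v 0 = (β * rs - 2 * rs / (1 + p * rs)) • g x₀ + (2 * p) • (x₀ - xs) := by
    simp only [hvdef]
    rw [hinit, hinit']
    module
  have i2 : ⟪v 0, v 0⟫ = (β * rs - 2 * rs / (1 + p * rs)) ^ 2 * ‖g x₀‖ ^ 2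
      + 2 * (β * rs - 2 * rs / (1 + p * rs)) * (2 * p) * ⟪g x₀, x₀ - xs⟫
      + (2 * p) ^ 2 * ‖x₀ - xs‖ ^ 2 := by
    rw [hv0, real_inner_add_add_self, real_inner_smul_left, real_inner_smul_right,
      real_inner_smul_left, real_inner_smul_right, real_inner_smul_left,
      real_inner_smul_right, real_inner_self_eq_norm_sq, real_inner_self_eq_norm_sq]
    ring
  have hscal0 := aux_scalar_E0 p rs β μ L (f x₀ - f xs) (‖g x₀‖ ^ 2)
    (‖x₀ - xs‖ ^ 2) ⟪g x₀, x₀ - xs⟫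
    hp0 hrs0 hq1 hβ0 hβ1 hp2 hL0 hsL1' hD0 hG0n hF0 hG0 hI0
  have hE0 : En 0 ≤ c * ((3 + (2 - β) ^ 2) / (2 * s) * ‖x₀ - xs‖ ^ 2) := by
    have hEn0 : En 0 = (1 + p * rs) * (f x₀ - f xs)
        + 1 / 4 * ((2 * rs / (1 + p * rs)) ^ 2 * ‖g x₀‖ ^ 2)
        + 1 / 4 * ((β * rs - 2 * rs / (1 + p * rs)) ^ 2 * ‖g x₀‖ ^ 2
          + 2 * (β * rs - 2 * rs / (1 + p * rs)) * (2 * p) * ⟪g x₀, x₀ - xs⟫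
          + (2 * p) ^ 2 * ‖x₀ - xs‖ ^ 2) := by
      simp only [hEndef]
      rw [hinit, i1, i2, hcdef]
    rw [hEn0, hcdef, ← hrs2]
    exact hscal0
  -- conclusion
  intro t ht
  have h1 := hdecay t ht
  have h2 := hEnlow t
  have h3 : En 0 * Real.exp (-(p / 4) * t)
      ≤ c * ((3 + (2 - β) ^ 2) / (2 * s) * ‖x₀ - xs‖ ^ 2) * Real.exp (-(p / 4) * t) :=
    mul_le_mul_of_nonneg_right hE0 (Real.exp_nonneg _)
  have h4 : c * (f (X t) - f xs)
      ≤ c * ((3 + (2 - β) ^ 2) / (2 * s) * ‖x₀ - xs‖ ^ 2 * Real.exp (-(p / 4) * t)) := by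
    calc c * (f (X t) - f xs) ≤ En t := h2
    _ ≤ En 0 * Real.exp (-(p / 4) * t) := h1
    _ ≤ c * ((3 + (2 - β) ^ 2) / (2 * s) * ‖x₀ - xs‖ ^ 2) * Real.exp (-(p / 4) * t) := h3
    _ = c * ((3 + (2 - β) ^ 2) / (2 * s) * ‖x₀ - xs‖ ^ 2 * Real.exp (-(p / 4) * t)) := by
      ring
  exact le_of_mul_le_mul_left h4 hc0
end

section
/- Along a solution X(t) of the β-High Resolution ODE, the energy functional E_β(t) = (1+√(μs))(f(X)−f(x*)) + (1/4)‖Ẋ‖² + (1/4)‖Ẋ + 2√μ(X−x*) + β√s∇f(X)‖² satisfies dE_β/dt ≤ −√μ(‖Ẋ‖² + (1+√(μs))⟨∇f(X), X−x*⟩ + (βs/2)‖∇f(X)‖²). -/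
open Real Set
open scoped RealInnerProductSpace

theorem energy_derivative_bound {n : ℕ}
    (f : EuclideanSpace ℝ (Fin n) → ℝ)
    (g : EuclideanSpace ℝ (Fin n) → EuclideanSpace ℝ (Fin n))
    (Hess : EuclideanSpace ℝ (Fin n) → EuclideanSpace ℝ (Fin n) →L[ℝ] EuclideanSpace ℝ (Fin n))
    (μ s β : ℝ) (hμ : 0 < μ) (hs : 0 < s) (hβ0 : 0 ≤ β) (hβ1 : β ≤ 1)
    (hgrad : ∀ x, HasGradientAt f (g x) x)
    (hHess : ∀ x, HasFDerivAt g (Hess x) x)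
    (hpsd : ∀ x v, 0 ≤ ⟪Hess x v, v⟫)
    (hsc : ConvexOn ℝ univ (fun x => f x - μ / 2 * ‖x‖ ^ 2))
    (xs : EuclideanSpace ℝ (Fin n)) (hmin : IsMinOn f univ xs)
    (X X' X'' : ℝ → EuclideanSpace ℝ (Fin n))
    (hX : ∀ t, HasDerivAt X (X' t) t) (hX' : ∀ t, HasDerivAt X' (X'' t) t)
    (hODE : ∀ t, X'' t + (2 * Real.sqrt μ) • X' t
      + (β * Real.sqrt s) • Hess (X t) (X' t)
      + (1 + Real.sqrt (μ * s)) • g (X t) = 0) :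
    ∀ t, deriv (fun t => (1 + Real.sqrt (μ * s)) * (f (X t) - f xs)
        + 1 / 4 * ‖X' t‖ ^ 2
        + 1 / 4 * ‖X' t + (2 * Real.sqrt μ) • (X t - xs)
            + (β * Real.sqrt s) • g (X t)‖ ^ 2) t
      ≤ -Real.sqrt μ * (‖X' t‖ ^ 2
          + (1 + Real.sqrt (μ * s)) * ⟪g (X t), X t - xs⟫
          + β * s / 2 * ‖g (X t)‖ ^ 2) := by
  intro t
  have hsqμ : (0:ℝ) ≤ Real.sqrt μ := Real.sqrt_nonneg μ
  have hsqs : (0:ℝ) ≤ Real.sqrt s := Real.sqrt_nonneg s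
  have hmuls : Real.sqrt (μ * s) = Real.sqrt μ * Real.sqrt s := Real.sqrt_mul hμ.le s
  have hss : Real.sqrt s * Real.sqrt s = s := Real.mul_self_sqrt hs.le
  have hfX : HasDerivAt (fun t => f (X t)) ⟪g (X t), X' t⟫ t := by
    have h := (hgrad (X t)).hasFDerivAt.comp_hasDerivAt t (hX t)
    simp at h
    exact h
  have hgX : HasDerivAt (fun t => g (X t)) (Hess (X t) (X' t)) t := by
    have h := (hHess (X t)).comp_hasDerivAt t (hX t)
    exact h
  have hv : HasDerivAt (fun t => X' t + (2 * Real.sqrt μ) • (X t - xs)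
      + (β * Real.sqrt s) • g (X t))
      (X'' t + (2 * Real.sqrt μ) • X' t + (β * Real.sqrt s) • Hess (X t) (X' t)) t :=
    ((hX' t).add (((hX t).sub_const xs).const_smul (2 * Real.sqrt μ))).add
      (hgX.const_smul (β * Real.sqrt s))
  have h1 : HasDerivAt (fun t => ‖X' t‖ ^ 2) (2 * ⟪X'' t, X' t⟫) t := by
    have h := (hX' t).inner ℝ (hX' t)
    have he : (fun t => ‖X' t‖ ^ 2) = fun t => ⟪X' t, X' t⟫ := by
      funext u; rw [real_inner_self_eq_norm_sq]
    rw [he]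
    refine h.congr_deriv ?_
    rw [real_inner_comm]; ring
  have h2 : HasDerivAt (fun t => ‖X' t + (2 * Real.sqrt μ) • (X t - xs)
      + (β * Real.sqrt s) • g (X t)‖ ^ 2)
      (2 * ⟪X'' t + (2 * Real.sqrt μ) • X' t + (β * Real.sqrt s) • Hess (X t) (X' t),
        X' t + (2 * Real.sqrt μ) • (X t - xs) + (β * Real.sqrt s) • g (X t)⟫) t := by
    have h := hv.inner ℝ hv
    have he : (fun t => ‖X' t + (2 * Real.sqrt μ) • (X t - xs)
        + (β * Real.sqrt s) • g (X t)‖ ^ 2)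
        = fun t => ⟪X' t + (2 * Real.sqrt μ) • (X t - xs) + (β * Real.sqrt s) • g (X t),
            X' t + (2 * Real.sqrt μ) • (X t - xs) + (β * Real.sqrt s) • g (X t)⟫ := by
      funext u; rw [real_inner_self_eq_norm_sq]
    rw [he]
    refine h.congr_deriv ?_
    rw [real_inner_comm]; ring
  have hE : HasDerivAt (fun t => (1 + Real.sqrt (μ * s)) * (f (X t) - f xs)
        + 1 / 4 * ‖X' t‖ ^ 2
        + 1 / 4 * ‖X' t + (2 * Real.sqrt μ) • (X t - xs)
            + (β * Real.sqrt s) • g (X t)‖ ^ 2)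
      ((1 + Real.sqrt (μ * s)) * ⟪g (X t), X' t⟫
        + 1 / 4 * (2 * ⟪X'' t, X' t⟫)
        + 1 / 4 * (2 * ⟪X'' t + (2 * Real.sqrt μ) • X' t
            + (β * Real.sqrt s) • Hess (X t) (X' t),
          X' t + (2 * Real.sqrt μ) • (X t - xs) + (β * Real.sqrt s) • g (X t)⟫)) t :=
    (((hfX.sub_const (f xs)).const_mul _).add (h1.const_mul _)).add (h2.const_mul _)
  rw [hE.deriv]
  have hX''eq : X'' t = -((2 * Real.sqrt μ) • X' t) - (β * Real.sqrt s) • Hess (X t) (X' t)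
      - (1 + Real.sqrt (μ * s)) • g (X t) := by
    have h := hODE t
    linear_combination (norm := module) h
  have hsum : X'' t + (2 * Real.sqrt μ) • X' t + (β * Real.sqrt s) • Hess (X t) (X' t)
      = -((1 + Real.sqrt (μ * s)) • g (X t)) := by
    have h := hODE t
    linear_combination (norm := module) h
  have e1 : ⟪X'' t, X' t⟫ = -(2 * Real.sqrt μ) * ‖X' t‖ ^ 2
      - (β * Real.sqrt s) * ⟪Hess (X t) (X' t), X' t⟫
      - (1 + Real.sqrt (μ * s)) * ⟪g (X t), X' t⟫ := by
    rw [hX''eq]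
    simp only [inner_sub_left, inner_neg_left, real_inner_smul_left,
      ← real_inner_self_eq_norm_sq]
    ring
  have e2 : ⟪X'' t + (2 * Real.sqrt μ) • X' t + (β * Real.sqrt s) • Hess (X t) (X' t),
      X' t + (2 * Real.sqrt μ) • (X t - xs) + (β * Real.sqrt s) • g (X t)⟫
      = -(1 + Real.sqrt (μ * s)) * (⟪g (X t), X' t⟫
        + 2 * Real.sqrt μ * ⟪g (X t), X t - xs⟫
        + β * Real.sqrt s * ‖g (X t)‖ ^ 2) := by
    rw [hsum]
    simp only [inner_add_right, inner_neg_left, real_inner_smul_left, real_inner_smul_right,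
      ← real_inner_self_eq_norm_sq]
    ring
  rw [e1, e2, hmuls]
  have hP : (0:ℝ) ≤ β * Real.sqrt s * ⟪Hess (X t) (X' t), X' t⟫ :=
    mul_nonneg (mul_nonneg hβ0 hsqs) (hpsd (X t) (X' t))
  have hG : (0:ℝ) ≤ β * Real.sqrt s * ‖g (X t)‖ ^ 2 :=
    mul_nonneg (mul_nonneg hβ0 hsqs) (sq_nonneg _)
  have hGs : β * Real.sqrt μ * (Real.sqrt s * Real.sqrt s) * ‖g (X t)‖ ^ 2
      = β * Real.sqrt μ * s * ‖g (X t)‖ ^ 2 := by rw [hss]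
  nlinarith [hP, hG, hGs]
end

section
/- Along a solution of the β-High Resolution ODE, the energy functional satisfies dE_β/dt ≤ −(√μ/4)E_β(t). -/
open Real Set
open scoped RealInnerProductSpace



lemma key_ineq (m τ β F A B G H iab iag ibg : ℝ)
    (hm : 0 < m) (hτ : 0 < τ) (hβ0 : 0 ≤ β) (hβ1 : β ≤ 1)
    (hF : 0 ≤ F) (hH : 0 ≤ H) (hA : 0 ≤ A) (hB : 0 ≤ B) (hG : 0 ≤ G)
    (hsc : F + m^2/2*B^2 ≤ ibg)
    (cs1 : iab ≤ A*B) (cs2 : iag ≤ A*G) :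
    -(m*A^2) - β*τ/2*H - (1+m*τ)*m*ibg - (1+m*τ)*β*τ/2*G^2 ≤
    -(m/4)*((1+m*τ)*F + 1/4*A^2
      + 1/4*(A^2 + 4*m^2*B^2 + β^2*τ^2*G^2 + 4*m*iab + 2*β*τ*iag + 4*m*β*τ*ibg)) := by
  nlinarith [mul_nonneg (by nlinarith [mul_nonneg (mul_nonneg (sq_nonneg m) hτ.le) (by linarith : (0:ℝ) ≤ 1 - β), mul_nonneg (sq_nonneg m) hτ.le] : (0:ℝ) ≤ (1+m*τ)*m - m^2*β*τ/4) (by linarith : (0:ℝ) ≤ ibg - F - m^2/2*B^2),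
    mul_nonneg (by positivity : (0:ℝ) ≤ m/8) (sq_nonneg (A - m*B)),
    mul_nonneg (by positivity : (0:ℝ) ≤ β*m/16) (sq_nonneg (A - τ*G)),
    mul_nonneg (by positivity : (0:ℝ) ≤ m^2/4) (by linarith : (0:ℝ) ≤ A*B - iab),
    mul_nonneg (by positivity : (0:ℝ) ≤ m*β*τ/8) (by linarith : (0:ℝ) ≤ A*G - iag),
    mul_nonneg (mul_nonneg hβ0 hτ.le) hH,
    mul_nonneg (mul_nonneg hm.le hτ.le) hF,
    mul_nonneg (by positivity : (0:ℝ) ≤ m^4*τ) (sq_nonneg B),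
    mul_nonneg (by positivity : (0:ℝ) ≤ β*m*τ^2) (sq_nonneg G),
    mul_nonneg (mul_nonneg hβ0 hτ.le) (sq_nonneg G),
    mul_nonneg (by positivity : (0:ℝ) ≤ m^3) (sq_nonneg B),
    mul_nonneg hm.le (sq_nonneg A),
    mul_nonneg (mul_nonneg hm.le (by linarith : (0:ℝ) ≤ 1 - β)) (sq_nonneg A),
    mul_nonneg (mul_nonneg (by positivity : (0:ℝ) ≤ m*τ^2*β) (by linarith : (0:ℝ) ≤ 1 - β)) (sq_nonneg G),
    mul_nonneg (mul_nonneg (by positivity : (0:ℝ) ≤ m^2*τ) (by linarith : (0:ℝ) ≤ 1 - β)) hF,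
    mul_nonneg (mul_nonneg (by positivity : (0:ℝ) ≤ m^4*τ) (by linarith : (0:ℝ) ≤ 1 - β)) (sq_nonneg B)]


lemma strong_convex_grad_ineq {n : ℕ}
    (f : EuclideanSpace ℝ (Fin n) → ℝ)
    (g : EuclideanSpace ℝ (Fin n) → EuclideanSpace ℝ (Fin n))
    (μ : ℝ)
    (hgrad : ∀ x, HasGradientAt f (g x) x)
    (hsc : ConvexOn ℝ univ (fun x => f x - μ / 2 * ‖x‖ ^ 2))
    (x y : EuclideanSpace ℝ (Fin n)) :
    f x + ⟪g x, y - x⟫ + μ / 2 * ‖y - x‖ ^ 2 ≤ f y := by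
  set φ : EuclideanSpace ℝ (Fin n) → ℝ := fun z => f z - μ / 2 * ‖z‖ ^ 2 with hφ
  set ψ : ℝ → ℝ := fun θ => φ (x + θ • (y - x)) with hψdef
  have hψconv : ConvexOn ℝ univ ψ := by
    have h := hsc.comp_affineMap (AffineMap.lineMap x y)
    have heq : ψ = (φ ∘ (AffineMap.lineMap x y)) := by
      funext θ
      simp [ψ, AffineMap.lineMap_apply, add_comm]
    rw [heq]
    simpa using h
  have hη0 : HasDerivAt (fun θ : ℝ => x + θ • (y - x)) (y - x) (0:ℝ) := by
    have := ((hasDerivAt_id (0:ℝ)).smul_const (y - x)).const_add x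
    simpa using this
  have hx0 : x + (0:ℝ) • (y - x) = x := by simp
  have h1 : HasDerivAt (fun θ : ℝ => f (x + θ • (y - x))) (⟪g x, y - x⟫) 0 := by
    have hg' : HasFDerivAt f (InnerProductSpace.toDual ℝ _ (g (x + (0:ℝ) • (y - x))))
        (x + (0:ℝ) • (y - x)) := (hgrad _).hasFDerivAt
    have := hg'.comp_hasDerivAt 0 hη0
    simpa [hx0, InnerProductSpace.toDual_apply_apply, Function.comp_def] using this
  have h2 : HasDerivAt (fun θ : ℝ => ‖x + θ • (y - x)‖ ^ 2)
      (⟪x, y - x⟫ + ⟪y - x, x⟫) 0 := by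
    have := HasDerivAt.inner ℝ hη0 hη0
    have heq : (fun θ : ℝ => ‖x + θ • (y - x)‖ ^ 2)
        = fun θ : ℝ => ⟪x + θ • (y - x), x + θ • (y - x)⟫ := by
      funext θ; rw [real_inner_self_eq_norm_sq]
    rw [heq]
    simpa [hx0] using this
  have hψd : HasDerivAt ψ (⟪g x, y - x⟫ - μ / 2 * (⟪x, y - x⟫ + ⟪y - x, x⟫)) 0 :=
    h1.sub ((h2.const_mul (μ / 2)))
  have hslope := hψconv.le_slope_of_hasDerivAt (mem_univ (0:ℝ)) (mem_univ (1:ℝ))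
    (by norm_num) hψd
  have hs1 : slope ψ 0 1 = ψ 1 - ψ 0 := by simp [slope]
  rw [hs1] at hslope
  have hψ1 : ψ 1 = f y - μ / 2 * ‖y‖ ^ 2 := by simp [ψ, φ]
  have hψ0 : ψ 0 = f x - μ / 2 * ‖x‖ ^ 2 := by simp [ψ, φ]
  rw [hψ1, hψ0] at hslope
  have hcomm : ⟪y - x, x⟫ = ⟪x, y - x⟫ := real_inner_comm _ _
  have hexp : ‖y - x‖ ^ 2 = ‖y‖ ^ 2 - ‖x‖ ^ 2 - 2 * ⟪x, y - x⟫ := by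
    have h3 : ⟪x, y - x⟫ = ⟪x, y⟫ - ‖x‖ ^ 2 := by
      rw [inner_sub_right, real_inner_self_eq_norm_sq]
    have h4 : ‖y - x‖ ^ 2 = ‖y‖ ^ 2 - 2 * ⟪y, x⟫ + ‖x‖ ^ 2 := norm_sub_sq_real y x
    rw [h4, h3, real_inner_comm y x]; ring
  rw [hcomm] at hslope
  rw [hexp]
  linarith [hslope]
theorem energy_derivative_lyapunov_bound {n : ℕ}
    (f : EuclideanSpace ℝ (Fin n) → ℝ)
    (g : EuclideanSpace ℝ (Fin n) → EuclideanSpace ℝ (Fin n))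
    (Hess : EuclideanSpace ℝ (Fin n) → EuclideanSpace ℝ (Fin n) →L[ℝ] EuclideanSpace ℝ (Fin n))
    (μ s β : ℝ) (hμ : 0 < μ) (hs : 0 < s) (hβ0 : 0 ≤ β) (hβ1 : β ≤ 1)
    (hgrad : ∀ x, HasGradientAt f (g x) x)
    (hHess : ∀ x, HasFDerivAt g (Hess x) x)
    (hpsd : ∀ x v, 0 ≤ ⟪Hess x v, v⟫)
    (hsc : ConvexOn ℝ univ (fun x => f x - μ / 2 * ‖x‖ ^ 2))
    (xs : EuclideanSpace ℝ (Fin n)) (hmin : IsMinOn f univ xs)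
    (X X' X'' : ℝ → EuclideanSpace ℝ (Fin n))
    (hX : ∀ t, HasDerivAt X (X' t) t) (hX' : ∀ t, HasDerivAt X' (X'' t) t)
    (hODE : ∀ t, X'' t + (2 * Real.sqrt μ) • X' t
      + (β * Real.sqrt s) • Hess (X t) (X' t)
      + (1 + Real.sqrt (μ * s)) • g (X t) = 0) :
    ∀ t, deriv (fun t => (1 + Real.sqrt (μ * s)) * (f (X t) - f xs)
        + 1 / 4 * ‖X' t‖ ^ 2
        + 1 / 4 * ‖X' t + (2 * Real.sqrt μ) • (X t - xs)
            + (β * Real.sqrt s) • g (X t)‖ ^ 2) t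
      ≤ -(Real.sqrt μ / 4) * ((1 + Real.sqrt (μ * s)) * (f (X t) - f xs)
          + 1 / 4 * ‖X' t‖ ^ 2
          + 1 / 4 * ‖X' t + (2 * Real.sqrt μ) • (X t - xs)
              + (β * Real.sqrt s) • g (X t)‖ ^ 2) := by
  intro t
  set m := Real.sqrt μ with hm
  set τ := Real.sqrt s with hτ
  have hm0 : 0 < m := Real.sqrt_pos.2 hμ
  have hτ0 : 0 < τ := Real.sqrt_pos.2 hs
  have hμm : m ^ 2 = μ := Real.sq_sqrt hμ.le
  have hμs : Real.sqrt (μ * s) = m * τ := Real.sqrt_mul hμ.le s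
  set c : ℝ := 1 + Real.sqrt (μ * s) with hc
  set v : ℝ → EuclideanSpace ℝ (Fin n) :=
    fun u => X' u + (2 * m) • (X u - xs) + (β * τ) • g (X u) with hv
  set w : EuclideanSpace ℝ (Fin n) :=
    X'' t + (2 * m) • X' t + (β * τ) • Hess (X t) (X' t) with hwdef
  have hfX : HasDerivAt (fun u => f (X u)) (⟪g (X t), X' t⟫) t := by
    have := ((hgrad (X t)).hasFDerivAt).comp_hasDerivAt t (hX t)
    simpa [InnerProductSpace.toDual_apply_apply, Function.comp_def] using this
  have h2 : HasDerivAt (fun u => ‖X' u‖ ^ 2) (⟪X' t, X'' t⟫ + ⟪X'' t, X' t⟫) t := by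
    have heq : (fun u => ‖X' u‖ ^ 2) = fun u => ⟪X' u, X' u⟫ := by
      funext u; rw [real_inner_self_eq_norm_sq]
    rw [heq]
    exact HasDerivAt.inner ℝ (hX' t) (hX' t)
  have hgX : HasDerivAt (fun u => g (X u)) (Hess (X t) (X' t)) t :=
    (hHess (X t)).comp_hasDerivAt t (hX t)
  have hvd : HasDerivAt v w t := by
    exact ((hX' t).add (((hX t).sub_const xs).const_smul (2 * m))).add
      (hgX.const_smul (β * τ))
  have h3 : HasDerivAt (fun u => ‖v u‖ ^ 2) (⟪v t, w⟫ + ⟪w, v t⟫) t := by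
    have heq : (fun u => ‖v u‖ ^ 2) = fun u => ⟪v u, v u⟫ := by
      funext u; rw [real_inner_self_eq_norm_sq]
    rw [heq]
    exact HasDerivAt.inner ℝ hvd hvd
  have hE : HasDerivAt (fun u => c * (f (X u) - f xs) + 1 / 4 * ‖X' u‖ ^ 2
      + 1 / 4 * ‖v u‖ ^ 2)
      (c * ⟪g (X t), X' t⟫ + 1 / 4 * (⟪X' t, X'' t⟫ + ⟪X'' t, X' t⟫)
        + 1 / 4 * (⟪v t, w⟫ + ⟪w, v t⟫)) t := by
    exact (((hfX.sub_const (f xs)).const_mul c).add (h2.const_mul (1 / 4))).add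
      (h3.const_mul (1 / 4))
  have hderiv : deriv (fun u => c * (f (X u) - f xs) + 1 / 4 * ‖X' u‖ ^ 2
      + 1 / 4 * ‖v u‖ ^ 2) t
      = c * ⟪g (X t), X' t⟫ + 1 / 4 * (⟪X' t, X'' t⟫ + ⟪X'' t, X' t⟫)
        + 1 / 4 * (⟪v t, w⟫ + ⟪w, v t⟫) := hE.deriv
  have hw : w = -(c • g (X t)) := by
    have h := hODE t
    have h' : w + c • g (X t) = 0 := by rw [hwdef, ← h]
    exact eq_neg_of_add_eq_zero_left h'
  have hX''v : X'' t = -((2 * m) • X' t + (β * τ) • Hess (X t) (X' t) + c • g (X t)) := by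
    have h := hODE t
    have h' : X'' t + ((2 * m) • X' t + (β * τ) • Hess (X t) (X' t) + c • g (X t)) = 0 := by
      rw [← h]; abel
    exact eq_neg_of_add_eq_zero_left h'
  have claim1 : c * ⟪g (X t), X' t⟫ + 1 / 4 * (⟪X' t, X'' t⟫ + ⟪X'' t, X' t⟫)
        + 1 / 4 * (⟪v t, w⟫ + ⟪w, v t⟫)
      = -(m * ‖X' t‖ ^ 2) - β * τ / 2 * ⟪Hess (X t) (X' t), X' t⟫
        - c * m * ⟪g (X t), X t - xs⟫ - c * β * τ / 2 * ‖g (X t)‖ ^ 2 := by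
    rw [hw, hX''v]
    simp only [hv, inner_add_left, inner_add_right, inner_neg_left, inner_neg_right,
      real_inner_smul_left, real_inner_smul_right]
    rw [real_inner_self_eq_norm_sq, real_inner_self_eq_norm_sq]
    simp only [real_inner_comm (g (X t))]
    rw [real_inner_comm (X' t) (Hess (X t) (X' t))]
    ring
  have claim2 : ‖v t‖ ^ 2 = ‖X' t‖ ^ 2 + 4 * m ^ 2 * ‖X t - xs‖ ^ 2
      + β ^ 2 * τ ^ 2 * ‖g (X t)‖ ^ 2 + 4 * m * ⟪X' t, X t - xs⟫
      + 2 * β * τ * ⟪X' t, g (X t)⟫ + 4 * m * β * τ * ⟪g (X t), X t - xs⟫ := by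
    rw [← real_inner_self_eq_norm_sq]
    simp only [hv, inner_add_left, inner_add_right, real_inner_smul_left,
      real_inner_smul_right]
    rw [real_inner_self_eq_norm_sq, real_inner_self_eq_norm_sq, real_inner_self_eq_norm_sq]
    rw [real_inner_comm (X t - xs) (X' t), real_inner_comm (g (X t)) (X' t),
      real_inner_comm (X t - xs) (g (X t))]
    ring
  have hscineq : (f (X t) - f xs) + m ^ 2 / 2 * ‖X t - xs‖ ^ 2 ≤ ⟪g (X t), X t - xs⟫ := by
    have h := strong_convex_grad_ineq f g μ hgrad hsc (X t) xs
    have h1 : ⟪g (X t), xs - X t⟫ = -⟪g (X t), X t - xs⟫ := by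
      rw [← neg_sub (X t) xs, inner_neg_right]
    have h2 : ‖xs - X t‖ = ‖X t - xs‖ := norm_sub_rev _ _
    rw [h1, h2] at h
    rw [hμm]
    linarith
  have hF0 : 0 ≤ f (X t) - f xs := sub_nonneg.2 (hmin (mem_univ (X t)))
  have hH0 : 0 ≤ ⟪Hess (X t) (X' t), X' t⟫ := hpsd (X t) (X' t)
  have key := key_ineq m τ β (f (X t) - f xs) ‖X' t‖ ‖X t - xs‖ ‖g (X t)‖
    ⟪Hess (X t) (X' t), X' t⟫ ⟪X' t, X t - xs⟫ ⟪X' t, g (X t)⟫ ⟪g (X t), X t - xs⟫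
    hm0 hτ0 hβ0 hβ1 hF0 hH0 (norm_nonneg _) (norm_nonneg _) (norm_nonneg _) hscineq
    (real_inner_le_norm _ _) (real_inner_le_norm _ _)
  calc deriv (fun u => c * (f (X u) - f xs) + 1 / 4 * ‖X' u‖ ^ 2 + 1 / 4 * ‖v u‖ ^ 2) t
      = -(m * ‖X' t‖ ^ 2) - β * τ / 2 * ⟪Hess (X t) (X' t), X' t⟫
        - c * m * ⟪g (X t), X t - xs⟫ - c * β * τ / 2 * ‖g (X t)‖ ^ 2 := by
        rw [hderiv, claim1]
    _ ≤ -(m / 4) * (c * (f (X t) - f xs) + 1 / 4 * ‖X' t‖ ^ 2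
          + 1 / 4 * (‖X' t‖ ^ 2 + 4 * m ^ 2 * ‖X t - xs‖ ^ 2
            + β ^ 2 * τ ^ 2 * ‖g (X t)‖ ^ 2 + 4 * m * ⟪X' t, X t - xs⟫
            + 2 * β * τ * ⟪X' t, g (X t)⟫ + 4 * m * β * τ * ⟪g (X t), X t - xs⟫)) := by
        have hceq : c = 1 + m * τ := by rw [hc, hμs]
        rw [hceq]
        convert key using 2 <;> ring
    _ = -(m / 4) * (c * (f (X t) - f xs) + 1 / 4 * ‖X' t‖ ^ 2 + 1 / 4 * ‖v t‖ ^ 2) := by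
        rw [claim2]
end

section
/- Discrete energy upper bound: for f μ-strongly convex with L-Lipschitz gradient, the discrete energy E_β(k) = ((1+√(μs))/(1−√(μs)))(f(x_k)−f(x*)) + (1/4)‖v_k‖² + (1/4)‖v_k + (2√μ/(1−√(μs)))(x_k−x*) + β√s∇f(x_k)‖² − βs‖∇f(x_k)‖²/(2(1−√(μs))) satisfies E_β(k) ≤ (1/(1−√(μs)) + β²Ls/2)(f(x_k)−f(x*)) + ((1+√(μs)+μs)/(1−√(μs))²)‖v_k‖² + (3μ/(1−√(μs))²)‖x_k−x*‖² + (√(μs)/(1−√(μs)))[f(x_k)−f(x*) − ((β²s√(μs) − (β²−β)s)/(2√(μs)))‖∇f(x_k)‖²]. -/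
open Real Set InnerProductSpace

local notation "⟪" x ", " y "⟫" => @inner ℝ _ _ x y

lemma descent_lemma {n : ℕ} (f : EuclideanSpace ℝ (Fin n) → ℝ)
    (g : EuclideanSpace ℝ (Fin n) → EuclideanSpace ℝ (Fin n)) (L : ℝ)
    (hgrad : ∀ x, HasGradientAt f (g x) x)
    (hLip : ∀ x y, ‖g x - g y‖ ≤ L * ‖x - y‖)
    (x y : EuclideanSpace ℝ (Fin n)) :
    f y ≤ f x + ⟪g x, y - x⟫ + L / 2 * ‖y - x‖ ^ 2 := by
  set ψ : ℝ → ℝ := fun t =>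
    f (x + t • (y - x)) - t * ⟪g x, y - x⟫ - L / 2 * t ^ 2 * ‖y - x‖ ^ 2 with hψdef
  have hd : ∀ t : ℝ, HasDerivAt ψ
      (⟪g (x + t • (y - x)), y - x⟫ - ⟪g x, y - x⟫ - L * t * ‖y - x‖ ^ 2) t := by
    intro t
    have hc : HasDerivAt (fun t : ℝ => x + t • (y - x)) (y - x) t := by
      simpa using ((hasDerivAt_id t).smul_const (y - x)).const_add x
    have h1 : HasDerivAt (fun t : ℝ => f (x + t • (y - x)))
        ⟪g (x + t • (y - x)), y - x⟫ t := by
      have := (hgrad (x + t • (y - x))).hasFDerivAt.comp_hasDerivAt t hc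
      simp at this
      exact this
    have h2 : HasDerivAt (fun t : ℝ => t * ⟪g x, y - x⟫) ⟪g x, y - x⟫ t := by
      simpa using (hasDerivAt_id t).mul_const ⟪g x, y - x⟫
    have h3 : HasDerivAt (fun t : ℝ => L / 2 * t ^ 2 * ‖y - x‖ ^ 2)
        (L * t * ‖y - x‖ ^ 2) t := by
      have := ((hasDerivAt_pow 2 t).const_mul (L / 2)).mul_const (‖y - x‖ ^ 2)
      convert this using 1
      · rfl
      · rfl
      · ring
    exact (h1.sub h2).sub h3
  have hmono : AntitoneOn ψ (Icc (0:ℝ) 1) := by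
    apply antitoneOn_of_deriv_nonpos (convex_Icc 0 1)
    · exact fun t _ => ((hd t).continuousAt).continuousWithinAt
    · exact fun t _ => ((hd t).differentiableAt).differentiableWithinAt
    · intro t ht
      rw [interior_Icc] at ht
      rw [(hd t).deriv]
      have h1 : ⟪g (x + t • (y - x)) - g x, y - x⟫ ≤ L * t * ‖y - x‖ ^ 2 := by
        calc ⟪g (x + t • (y - x)) - g x, y - x⟫ ≤ ‖g (x + t • (y - x)) - g x‖ * ‖y - x‖ :=
              real_inner_le_norm _ _
          _ ≤ (L * ‖(x + t • (y - x)) - x‖) * ‖y - x‖ := by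
              apply mul_le_mul_of_nonneg_right (hLip _ _) (norm_nonneg _)
          _ = L * t * ‖y - x‖ ^ 2 := by
              rw [add_sub_cancel_left, norm_smul]
              simp [abs_of_pos ht.1]
              ring
      have := inner_sub_left (𝕜 := ℝ) (g (x + t • (y - x))) (g x) (y - x)
      linarith [h1, this.symm.le, this.le]
  have h01 := hmono (left_mem_Icc.2 zero_le_one) (right_mem_Icc.2 zero_le_one) zero_le_one
  simp only [hψdef] at h01
  simp only [one_smul, zero_smul, add_zero, add_sub_cancel] at h01
  linarith

set_option maxHeartbeats 1000000 in
lemma alg_ineq (b t β L A V X G p q r : ℝ) (hb : 0 < b) (ht : 0 < t)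
    (hbt : b * t < 1) (hβ0 : 0 ≤ β)
    (hA : 0 ≤ A) (hG : G ^ 2 ≤ 2 * L * A)
    (hp : p ≤ V * X) (hq : q ≤ V * G) (hr : r ≤ X * G) :
    ((1 + b * t) / (1 - b * t)) * A + 1 / 4 * V ^ 2
      + 1 / 4 * (V ^ 2 + (2 * b / (1 - b * t)) ^ 2 * X ^ 2 + (β * t) ^ 2 * G ^ 2
          + 2 * (2 * b / (1 - b * t)) * p + 2 * (β * t) * q
          + 2 * (2 * b / (1 - b * t)) * (β * t) * r)
      - β * t ^ 2 * G ^ 2 / (2 * (1 - b * t))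
    ≤ (1 / (1 - b * t) + β ^ 2 * L * t ^ 2 / 2) * A
      + (1 + b * t + b ^ 2 * t ^ 2) / (1 - b * t) ^ 2 * V ^ 2
      + 3 * b ^ 2 / (1 - b * t) ^ 2 * X ^ 2
      + b * t / (1 - b * t) *
          (A - (β ^ 2 * t ^ 2 * (b * t) - (β ^ 2 - β) * t ^ 2) / (2 * (b * t)) * G ^ 2) := by
  have h1 : (0:ℝ) < 1 - b * t := by linarith
  have hb0 : b ≠ 0 := ne_of_gt hb
  have ht0 : t ≠ 0 := ne_of_gt ht
  have h1ne : (1:ℝ) - b * t ≠ 0 := ne_of_gt h1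
  have hs1 : 0 ≤ (1 - b*t)^2 * β^2 * t^2 * (2*L*A - G^2) :=
    mul_nonneg (by positivity) (by linarith)
  have hs2 : 0 ≤ (1 - b*t)^2 * V^2 + 4*b^2*X^2 - 4*b*(1 - b*t)*p := by
    have h := mul_nonneg (mul_nonneg hb.le h1.le) (sub_nonneg.2 hp)
    nlinarith [sq_nonneg ((1 - b*t)*V - 2*b*X)]
  have hs3 : 0 ≤ (1 - b*t)^2 * V^2 + (1 - b*t)^2 * β^2 * t^2 * G^2
      - 2*β*t*(1 - b*t)^2*q := by
    have h := mul_nonneg (mul_nonneg (mul_nonneg hβ0 ht.le) (sq_nonneg (1 - b*t)))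
      (sub_nonneg.2 hq)
    nlinarith [sq_nonneg ((1 - b*t)*V - (1 - b*t)*β*t*G)]
  have hs4 : 0 ≤ (1 - b*t)^2 * β^2 * t^2 * G^2 + 4*b^2*X^2
      - 4*β*b*t*(1 - b*t)*r := by
    have h := mul_nonneg (mul_nonneg (mul_nonneg (mul_nonneg hβ0 hb.le) ht.le) h1.le)
      (sub_nonneg.2 hr)
    nlinarith [sq_nonneg ((1 - b*t)*β*t*G - 2*b*X)]
  have hs5 : 0 ≤ 12*b*t*V^2 := by positivity
  have hP : 0 ≤ (1 - b*t)^2 * β^2 * t^2 * (2*L*A - G^2)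
      + ((1 - b*t)^2 * V^2 + 4*b^2*X^2 - 4*b*(1 - b*t)*p)
      + ((1 - b*t)^2 * V^2 + (1 - b*t)^2 * β^2 * t^2 * G^2 - 2*β*t*(1 - b*t)^2*q)
      + ((1 - b*t)^2 * β^2 * t^2 * G^2 + 4*b^2*X^2 - 4*β*b*t*(1 - b*t)*r)
      + 12*b*t*V^2 := by linarith
  have heq : ((1 / (1 - b * t) + β ^ 2 * L * t ^ 2 / 2) * A
      + (1 + b * t + b ^ 2 * t ^ 2) / (1 - b * t) ^ 2 * V ^ 2
      + 3 * b ^ 2 / (1 - b * t) ^ 2 * X ^ 2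
      + b * t / (1 - b * t) *
          (A - (β ^ 2 * t ^ 2 * (b * t) - (β ^ 2 - β) * t ^ 2) / (2 * (b * t)) * G ^ 2))
      - (((1 + b * t) / (1 - b * t)) * A + 1 / 4 * V ^ 2
      + 1 / 4 * (V ^ 2 + (2 * b / (1 - b * t)) ^ 2 * X ^ 2 + (β * t) ^ 2 * G ^ 2
          + 2 * (2 * b / (1 - b * t)) * p + 2 * (β * t) * q
          + 2 * (2 * b / (1 - b * t)) * (β * t) * r)
      - β * t ^ 2 * G ^ 2 / (2 * (1 - b * t)))
      = ((1 - b*t)^2 * β^2 * t^2 * (2*L*A - G^2)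
      + ((1 - b*t)^2 * V^2 + 4*b^2*X^2 - 4*b*(1 - b*t)*p)
      + ((1 - b*t)^2 * V^2 + (1 - b*t)^2 * β^2 * t^2 * G^2 - 2*β*t*(1 - b*t)^2*q)
      + ((1 - b*t)^2 * β^2 * t^2 * G^2 + 4*b^2*X^2 - 4*β*b*t*(1 - b*t)*r)
      + 12*b*t*V^2) / (4 * (1 - b*t)^2) := by
    field_simp
    ring
  have hdiv : 0 ≤ ((1 - b*t)^2 * β^2 * t^2 * (2*L*A - G^2)
      + ((1 - b*t)^2 * V^2 + 4*b^2*X^2 - 4*b*(1 - b*t)*p)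
      + ((1 - b*t)^2 * V^2 + (1 - b*t)^2 * β^2 * t^2 * G^2 - 2*β*t*(1 - b*t)^2*q)
      + ((1 - b*t)^2 * β^2 * t^2 * G^2 + 4*b^2*X^2 - 4*β*b*t*(1 - b*t)*r)
      + 12*b*t*V^2) / (4 * (1 - b*t)^2) := div_nonneg hP (by positivity)
  linarith

theorem discrete_energy_upper_bound {n : ℕ}
    (f : EuclideanSpace ℝ (Fin n) → ℝ)
    (g : EuclideanSpace ℝ (Fin n) → EuclideanSpace ℝ (Fin n))
    (μ L s β : ℝ) (hμ : 0 < μ) (hμL : μ ≤ L) (hs : 0 < s) (hμs : μ * s < 1)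
    (hβ0 : 0 ≤ β) (hβ1 : β ≤ 1)
    (hgrad : ∀ x, HasGradientAt f (g x) x)
    (hLip : ∀ x y, ‖g x - g y‖ ≤ L * ‖x - y‖)
    (hsc : ConvexOn ℝ univ (fun x => f x - μ / 2 * ‖x‖ ^ 2))
    (xs : EuclideanSpace ℝ (Fin n)) (hmin : IsMinOn f univ xs)
    (xk vk : EuclideanSpace ℝ (Fin n)) :
    ((1 + Real.sqrt (μ * s)) / (1 - Real.sqrt (μ * s))) * (f xk - f xs)
      + 1 / 4 * ‖vk‖ ^ 2
      + 1 / 4 * ‖vk + (2 * Real.sqrt μ / (1 - Real.sqrt (μ * s))) • (xk - xs)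
          + (β * Real.sqrt s) • g xk‖ ^ 2
      - β * s * ‖g xk‖ ^ 2 / (2 * (1 - Real.sqrt (μ * s)))
    ≤ (1 / (1 - Real.sqrt (μ * s)) + β ^ 2 * L * s / 2) * (f xk - f xs)
      + (1 + Real.sqrt (μ * s) + μ * s) / (1 - Real.sqrt (μ * s)) ^ 2 * ‖vk‖ ^ 2
      + 3 * μ / (1 - Real.sqrt (μ * s)) ^ 2 * ‖xk - xs‖ ^ 2
      + Real.sqrt (μ * s) / (1 - Real.sqrt (μ * s)) *
          (f xk - f xs - (β ^ 2 * s * Real.sqrt (μ * s) - (β ^ 2 - β) * s)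
            / (2 * Real.sqrt (μ * s)) * ‖g xk‖ ^ 2) := by
  have hL : 0 < L := lt_of_lt_of_le hμ hμL
  -- basic facts about the minimizer
  have hA : 0 ≤ f xk - f xs := sub_nonneg.2 (hmin (mem_univ xk))
  -- gradient norm bound : ‖g xk‖² ≤ 2 L (f xk - f xs)
  have hGbound : ‖g xk‖ ^ 2 ≤ 2 * L * (f xk - f xs) := by
    have hdes := descent_lemma f g L hgrad hLip xk (xk - L⁻¹ • g xk)
    have h1 : (xk - L⁻¹ • g xk) - xk = -(L⁻¹ • g xk) := by abel
    rw [h1] at hdes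
    have h2 : ⟪g xk, -(L⁻¹ • g xk)⟫ = -(L⁻¹ * ‖g xk‖ ^ 2) := by
      rw [inner_neg_right, real_inner_smul_right, real_inner_self_eq_norm_sq]
    have h3 : ‖-(L⁻¹ • g xk)‖ ^ 2 = L⁻¹ ^ 2 * ‖g xk‖ ^ 2 := by
      rw [norm_neg, norm_smul, mul_pow]
      congr 1
      rw [norm_inv, Real.norm_eq_abs, abs_of_pos hL]
    rw [h2, h3] at hdes
    have hmin' : f xs ≤ f (xk - L⁻¹ • g xk) := hmin (mem_univ _)
    have hL0 : L ≠ 0 := ne_of_gt hL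
    have e1 : f xk + -(L⁻¹ * ‖g xk‖ ^ 2) + L / 2 * (L⁻¹ ^ 2 * ‖g xk‖ ^ 2)
        = f xk - ‖g xk‖ ^ 2 / (2 * L) := by
      field_simp
      ring
    rw [e1] at hdes
    have h4 : ‖g xk‖ ^ 2 / (2 * L) ≤ f xk - f xs := by linarith
    calc ‖g xk‖ ^ 2 = ‖g xk‖ ^ 2 / (2 * L) * (2 * L) := by field_simp
      _ ≤ (f xk - f xs) * (2 * L) := by
          exact mul_le_mul_of_nonneg_right h4 (by positivity)
      _ = 2 * L * (f xk - f xs) := by ring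
  -- square-root facts
  have hb2 : Real.sqrt μ ^ 2 = μ := Real.sq_sqrt hμ.le
  have ht2 : Real.sqrt s ^ 2 = s := Real.sq_sqrt hs.le
  have hab : Real.sqrt (μ * s) = Real.sqrt μ * Real.sqrt s := Real.sqrt_mul hμ.le s
  have hb : 0 < Real.sqrt μ := Real.sqrt_pos.2 hμ
  have ht : 0 < Real.sqrt s := Real.sqrt_pos.2 hs
  have hbt : Real.sqrt μ * Real.sqrt s < 1 := by
    rw [← hab]
    have : Real.sqrt (μ * s) < Real.sqrt 1 :=
      Real.sqrt_lt_sqrt (mul_nonneg hμ.le hs.le) hμs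
    simpa using this
  set b := Real.sqrt μ with hbdef
  set t := Real.sqrt s with htdef
  rw [hab, ← hb2, ← ht2]
  -- expand the norm of the sum
  have hexp : ‖vk + (2 * b / (1 - b * t)) • (xk - xs) + (β * t) • g xk‖ ^ 2
      = ‖vk‖ ^ 2 + (2 * b / (1 - b * t)) ^ 2 * ‖xk - xs‖ ^ 2
        + (β * t) ^ 2 * ‖g xk‖ ^ 2
        + 2 * (2 * b / (1 - b * t)) * ⟪vk, xk - xs⟫
        + 2 * (β * t) * ⟪vk, g xk⟫
        + 2 * (2 * b / (1 - b * t)) * (β * t) * ⟪xk - xs, g xk⟫ := by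
    simp only [← real_inner_self_eq_norm_sq, inner_add_left, inner_add_right,
      real_inner_smul_left, real_inner_smul_right]
    rw [real_inner_comm (xk - xs) vk, real_inner_comm (g xk) vk,
      real_inner_comm (g xk) (xk - xs)]
    ring
  have key := alg_ineq b t β L (f xk - f xs) ‖vk‖ ‖xk - xs‖ ‖g xk‖
    ⟪vk, xk - xs⟫ ⟪vk, g xk⟫ ⟪xk - xs, g xk⟫ hb ht hbt hβ0 hA hGbound
    (real_inner_le_norm vk (xk - xs)) (real_inner_le_norm vk (g xk))
    (real_inner_le_norm (xk - xs) (g xk))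
  linarith [key, hexp]
end

section
/- Phase transition existence: with h defined as above, if 0 < μ ≤ L and 25μ/(12L−μ)² ≤ s ≤ 1/(4L), then there exists β_c ∈ [0,1] such that h(β) ≤ 0 for all β ∈ [0, β_c] and h(β) > 0 for all β ∈ (β_c, 1]. -/
open Real

theorem phase_transition_existence (μ L s : ℝ) (hμ : 0 < μ) (hμL : μ ≤ L)
    (hslb : 25 * μ / (12 * L - μ) ^ 2 ≤ s) (hsub : s ≤ 1 / (4 * L)) :
    ∃ βc ∈ Set.Icc (0:ℝ) 1,
      (∀ β ∈ Set.Icc (0:ℝ) βc,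
        (L * μ * s ^ 2 - L * s * Real.sqrt (μ * s)) * β ^ 2
          + (2 * L * s * Real.sqrt (μ * s) - L * μ * s ^ 2 + 2 * L * s) * β
          + (Real.sqrt (μ * s) - 3 * L * s * Real.sqrt (μ * s) - 2 * L * s)
          - 1 / 6 * (L * s / 2 * Real.sqrt (μ * s) * (1 - Real.sqrt (μ * s)) ^ 2 * β ^ 2
              + Real.sqrt (μ * s) - μ * s) ≤ 0) ∧
      (∀ β ∈ Set.Ioc βc (1:ℝ),
        (L * μ * s ^ 2 - L * s * Real.sqrt (μ * s)) * β ^ 2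
          + (2 * L * s * Real.sqrt (μ * s) - L * μ * s ^ 2 + 2 * L * s) * β
          + (Real.sqrt (μ * s) - 3 * L * s * Real.sqrt (μ * s) - 2 * L * s)
          - 1 / 6 * (L * s / 2 * Real.sqrt (μ * s) * (1 - Real.sqrt (μ * s)) ^ 2 * β ^ 2
              + Real.sqrt (μ * s) - μ * s) > 0) := by
  have hL : 0 < L := lt_of_lt_of_le hμ hμL
  have h12Lμ : 0 < 12 * L - μ := by linarith
  have hden : 0 < (12 * L - μ) ^ 2 := by positivity
  have hs : 0 < s := lt_of_lt_of_le (div_pos (by positivity) hden) hslb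
  have hμs : 0 ≤ μ * s := by positivity
  set t := Real.sqrt (μ * s) with ht
  have ht0 : 0 ≤ t := Real.sqrt_nonneg _
  have ht2 : t ^ 2 = μ * s := Real.sq_sqrt hμs
  have hLs : 0 < L * s := by positivity
  -- μ * s ≤ 1/4 hence t ≤ 1
  have hμs4 : μ * s ≤ 1 / 4 := by
    have h1 : s * (4 * L) ≤ 1 := by
      rw [le_div_iff₀ (by positivity)] at hsub; linarith
    nlinarith
  have ht1 : t ≤ 1 := by nlinarith
  -- 12 L s ≥ 5 t
  have hkey : 5 * t ≤ 12 * L * s := by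
    have h1 : 25 * μ ≤ s * (12 * L - μ) ^ 2 := by
      rw [div_le_iff₀ hden] at hslb; linarith
    have h24 : 0 ≤ 24 * L - μ := by linarith
    have h2 : 25 * (μ * s) ≤ (12 * L * s) ^ 2 := by
      nlinarith [mul_le_mul_of_nonneg_left h1 hs.le,
        mul_nonneg (mul_nonneg (sq_nonneg s) hμ.le) h24]
    nlinarith [sq_nonneg (12 * L * s - 5 * t), sq_nonneg (12 * L * s + 5 * t)]
  set h : ℝ → ℝ := fun β =>
    (L * μ * s ^ 2 - L * s * t) * β ^ 2
      + (2 * L * s * t - L * μ * s ^ 2 + 2 * L * s) * β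
      + (t - 3 * L * s * t - 2 * L * s)
      - 1 / 6 * (L * s / 2 * t * (1 - t) ^ 2 * β ^ 2 + t - μ * s) with hh
  have hcont : Continuous h := by fun_prop
  have hh0 : h 0 ≤ 0 := by
    simp only [hh]
    nlinarith
  have hmono : ∀ β₁ β₂ : ℝ, 0 ≤ β₁ → β₁ ≤ β₂ → β₂ ≤ 1 → h β₁ ≤ h β₂ := by
    intro β₁ β₂ h1 h12 h21
    clear hslb hsub hcont hh0 hμs4 hkey hden h12Lμ
    simp only [hh]
    have hLμ : L * μ * s ^ 2 = L * s * t ^ 2 := by rw [ht2]; ring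
    rw [hLμ]
    have hA : L * s * t ^ 2 - L * s * t - 1 / 12 * (L * s * t * (1 - t) ^ 2) ≤ 0 := by
      nlinarith [mul_nonneg (mul_nonneg hLs.le ht0) (sub_nonneg.2 ht1),
        mul_nonneg (mul_nonneg hLs.le ht0) (sq_nonneg (1 - t))]
    have hAB : 0 ≤ 2 * (L * s * t ^ 2 - L * s * t - 1 / 12 * (L * s * t * (1 - t) ^ 2))
        + (2 * L * s * t - L * s * t ^ 2 + 2 * L * s) := by
      nlinarith [mul_nonneg (mul_nonneg hLs.le ht0) (sq_nonneg (1 - t)),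
        mul_nonneg (mul_nonneg (mul_nonneg hLs.le ht0) ht0) (sub_nonneg.2 ht1),
        sq_nonneg t]
    have hinner : 0 ≤ (L * s * t ^ 2 - L * s * t - 1 / 12 * (L * s * t * (1 - t) ^ 2))
        * (β₁ + β₂) + (2 * L * s * t - L * s * t ^ 2 + 2 * L * s) := by
      nlinarith [mul_nonneg (neg_nonneg.2 hA) (show (0:ℝ) ≤ 2 - (β₁ + β₂) by linarith)]
    have key : 0 ≤ (β₂ - β₁) * ((L * s * t ^ 2 - L * s * t
        - 1 / 12 * (L * s * t * (1 - t) ^ 2)) * (β₁ + β₂)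
        + (2 * L * s * t - L * s * t ^ 2 + 2 * L * s)) :=
      mul_nonneg (by linarith) hinner
    linarith [key]
  set S : Set ℝ := {β | β ∈ Set.Icc (0:ℝ) 1 ∧ h β ≤ 0} with hS
  have h0S : (0:ℝ) ∈ S := ⟨⟨le_refl _, zero_le_one⟩, hh0⟩
  have hSne : S.Nonempty := ⟨0, h0S⟩
  have hSbdd : BddAbove S := ⟨1, fun x hx => hx.1.2⟩
  have hSclosed : IsClosed S := by
    have : S = Set.Icc (0:ℝ) 1 ∩ h ⁻¹' Set.Iic 0 := rfl
    rw [this]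
    exact isClosed_Icc.inter (IsClosed.preimage hcont isClosed_Iic)
  set βc := sSup S with hβc
  have hβcS : βc ∈ S := hSclosed.csSup_mem hSne hSbdd
  refine ⟨βc, ⟨hβcS.1.1, hβcS.1.2⟩, ?_, ?_⟩
  · intro β hβ
    exact le_trans (hmono β βc hβ.1 hβ.2 hβcS.1.2) hβcS.2
  · intro β hβ
    by_contra hc
    push_neg at hc
    have : β ∈ S := ⟨⟨le_trans hβcS.1.1 hβ.1.le, hβ.2⟩, hc⟩
    exact absurd (le_csSup hSbdd this) (not_le.2 hβ.1)
end

section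
/- Lower bound of discrete energy by function values: for f μ-strongly convex with L-Lipschitz gradient, minimizer x*, s = 1/(cL) with c ≥ 4 and μ ≤ L, and β ∈ [0,1], the discrete energy E_β(k) (as defined) satisfies E_β(k) ≥ [(1+√(μ/(cL)))/(1−√(μ/(cL))) − β/(c(1−√(μ/(cL))))]·(f(x_k) − f(x*)); equivalently f(x_k) − f(x*) ≤ (c(1−√(μ/(cL)))/(c + c√(μ/(cL)) − β))·E_β(k). -/
open Real Set

private lemma descent_aux {n : ℕ} (f : EuclideanSpace ℝ (Fin n) → ℝ)
    (g : EuclideanSpace ℝ (Fin n) → EuclideanSpace ℝ (Fin n))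
    (L : ℝ) (hL : 0 < L)
    (hgrad : ∀ x, HasGradientAt f (g x) x)
    (hLip : ∀ x y, ‖g x - g y‖ ≤ L * ‖x - y‖)
    (x y : EuclideanSpace ℝ (Fin n)) :
    f y ≤ f x + inner ℝ (g x) (y - x) + L / 2 * ‖y - x‖ ^ 2 := by
  set d := y - x with hd
  have hgc : Continuous g := by
    have : LipschitzWith (Real.toNNReal L) g :=
      LipschitzWith.of_dist_le_mul (fun a b => by
        rw [dist_eq_norm, dist_eq_norm, Real.coe_toNNReal L hL.le]; exact hLip a b)
    exact this.continuous
  set ψ : ℝ → ℝ := fun t => inner ℝ (g (x + t • d)) d with hψ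
  have hγ : ∀ t : ℝ, HasDerivAt (fun t : ℝ => x + t • d) d t := fun t => by
    simpa using ((hasDerivAt_id t).smul_const d).const_add x
  have hφ : ∀ t : ℝ, HasDerivAt (fun t : ℝ => f (x + t • d)) (ψ t) t := fun t => by
    have h1 := (hgrad (x + t • d)).hasFDerivAt.comp_hasDerivAt t (hγ t)
    simp [InnerProductSpace.toDual_apply_apply, hψ] at h1; exact h1
  have hcont : Continuous ψ := by
    apply Continuous.inner
    · exact hgc.comp (by continuity)
    · exact continuous_const
  have hint : ∫ t in (0:ℝ)..1, ψ t = f y - f x := by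
    have := intervalIntegral.integral_eq_sub_of_hasDerivAt
      (f := fun t : ℝ => f (x + t • d)) (f' := ψ) (a := 0) (b := 1)
      (fun t _ => hφ t) (hcont.intervalIntegrable 0 1)
    simpa [hd] using this
  have hbound : ∀ t ∈ Icc (0:ℝ) 1, ψ t ≤ ψ 0 + (L * ‖d‖ ^ 2) * t := by
    intro t ht
    have h1 : ψ t - ψ 0 = inner ℝ (g (x + t • d) - g (x + (0:ℝ) • d)) d := by
      rw [inner_sub_left]
    have h2 : ψ t - ψ 0 ≤ ‖g (x + t • d) - g (x + (0:ℝ) • d)‖ * ‖d‖ := by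
      rw [h1]; exact real_inner_le_norm _ _
    have h3 : ‖g (x + t • d) - g (x + (0:ℝ) • d)‖ ≤ L * (t * ‖d‖) := by
      have := hLip (x + t • d) (x + (0:ℝ) • d)
      have heq : (x + t • d) - (x + (0:ℝ) • d) = t • d := by
        simp
      rw [heq, norm_smul] at this
      simpa [abs_of_nonneg ht.1] using this
    nlinarith [norm_nonneg d, mul_le_mul_of_nonneg_right h3 (norm_nonneg d)]
  have hIb : ∫ t in (0:ℝ)..1, ψ t ≤ ∫ t in (0:ℝ)..1, (ψ 0 + (L * ‖d‖ ^ 2) * t) := by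
    apply intervalIntegral.integral_mono_on zero_le_one (hcont.intervalIntegrable 0 1)
    · exact (intervalIntegrable_const).add ((intervalIntegral.intervalIntegrable_id).const_mul _)
    · exact hbound
  have hIc : ∫ t in (0:ℝ)..1, (ψ 0 + (L * ‖d‖ ^ 2) * t) = ψ 0 + L / 2 * ‖d‖ ^ 2 := by
    rw [intervalIntegral.integral_add (intervalIntegrable_const)
      ((intervalIntegral.intervalIntegrable_id).const_mul _),
      intervalIntegral.integral_const_mul, integral_id]
    simp; ring
  have hψ0 : ψ 0 = inner ℝ (g x) d := by simp [hψ]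
  have : f y - f x ≤ ψ 0 + L / 2 * ‖d‖ ^ 2 := by
    rw [← hint, ← hIc]; exact hIb
  rw [hψ0] at this
  linarith

private lemma grad_sq_aux {n : ℕ} (f : EuclideanSpace ℝ (Fin n) → ℝ)
    (g : EuclideanSpace ℝ (Fin n) → EuclideanSpace ℝ (Fin n))
    (L : ℝ) (hL : 0 < L)
    (hgrad : ∀ x, HasGradientAt f (g x) x)
    (hLip : ∀ x y, ‖g x - g y‖ ≤ L * ‖x - y‖)
    (xs : EuclideanSpace ℝ (Fin n)) (hmin : IsMinOn f univ xs)
    (x : EuclideanSpace ℝ (Fin n)) :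
    ‖g x‖ ^ 2 ≤ 2 * L * (f x - f xs) := by
  set y := x - L⁻¹ • g x with hy
  have hd : y - x = -(L⁻¹ • g x) := by rw [hy]; abel
  have h1 := descent_aux f g L hL hgrad hLip x y
  have h2 : (inner ℝ (g x) (y - x) : ℝ) = -(L⁻¹ * ‖g x‖ ^ 2) := by
    rw [hd, inner_neg_right, real_inner_smul_right, real_inner_self_eq_norm_sq]
  have h3 : ‖y - x‖ ^ 2 = L⁻¹ ^ 2 * ‖g x‖ ^ 2 := by
    rw [hd, norm_neg, norm_smul, mul_pow]
    congr 1
    rw [norm_inv, Real.norm_eq_abs, abs_of_pos hL]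
  have h4 : f xs ≤ f y := isMinOn_iff.mp hmin y (mem_univ y)
  rw [h2, h3] at h1
  have hL' : L ≠ 0 := ne_of_gt hL
  have : f xs ≤ f x - L⁻¹ * ‖g x‖ ^ 2 + L / 2 * (L⁻¹ ^ 2 * ‖g x‖ ^ 2) := le_trans h4 (by linarith)
  have he : f x - L⁻¹ * ‖g x‖ ^ 2 + L / 2 * (L⁻¹ ^ 2 * ‖g x‖ ^ 2)
      = f x - ‖g x‖ ^ 2 / (2 * L) := by field_simp; ring
  rw [he] at this
  have h5 : ‖g x‖ ^ 2 / (2 * L) ≤ f x - f xs := by linarith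
  have h6 := (div_le_iff₀ (by positivity : (0:ℝ) < 2 * L)).mp h5
  nlinarith [h6]

theorem discrete_energy_lower_bound {n : ℕ}
    (f : EuclideanSpace ℝ (Fin n) → ℝ)
    (g : EuclideanSpace ℝ (Fin n) → EuclideanSpace ℝ (Fin n))
    (μ L c β : ℝ) (hμ : 0 < μ) (hμL : μ ≤ L) (hc : 4 ≤ c)
    (hβ0 : 0 ≤ β) (hβ1 : β ≤ 1)
    (hgrad : ∀ x, HasGradientAt f (g x) x)
    (hLip : ∀ x y, ‖g x - g y‖ ≤ L * ‖x - y‖)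
    (hsc : ConvexOn ℝ univ (fun x => f x - μ / 2 * ‖x‖ ^ 2))
    (xs : EuclideanSpace ℝ (Fin n)) (hmin : IsMinOn f univ xs)
    (xk vk : EuclideanSpace ℝ (Fin n)) :
    (((1 + Real.sqrt (μ * (1 / (c * L)))) / (1 - Real.sqrt (μ * (1 / (c * L)))))
        * (f xk - f xs)
      + 1 / 4 * ‖vk‖ ^ 2
      + 1 / 4 * ‖vk + (2 * Real.sqrt μ / (1 - Real.sqrt (μ * (1 / (c * L))))) • (xk - xs)
          + (β * Real.sqrt (1 / (c * L))) • g xk‖ ^ 2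
      - β * (1 / (c * L)) * ‖g xk‖ ^ 2 / (2 * (1 - Real.sqrt (μ * (1 / (c * L)))))
      ≥ ((1 + Real.sqrt (μ / (c * L))) / (1 - Real.sqrt (μ / (c * L)))
          - β / (c * (1 - Real.sqrt (μ / (c * L))))) * (f xk - f xs)) ∧
    (f xk - f xs ≤ c * (1 - Real.sqrt (μ / (c * L)))
        / (c + c * Real.sqrt (μ / (c * L)) - β)
      * (((1 + Real.sqrt (μ * (1 / (c * L)))) / (1 - Real.sqrt (μ * (1 / (c * L)))))
            * (f xk - f xs)
        + 1 / 4 * ‖vk‖ ^ 2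
        + 1 / 4 * ‖vk + (2 * Real.sqrt μ / (1 - Real.sqrt (μ * (1 / (c * L))))) • (xk - xs)
            + (β * Real.sqrt (1 / (c * L))) • g xk‖ ^ 2
        - β * (1 / (c * L)) * ‖g xk‖ ^ 2 / (2 * (1 - Real.sqrt (μ * (1 / (c * L))))))) := by
  have hL : 0 < L := lt_of_lt_of_le hμ hμL
  have hc0 : 0 < c := lt_of_lt_of_le (by norm_num) hc
  have hcL : 0 < c * L := mul_pos hc0 hL
  rw [show μ * (1 / (c * L)) = μ / (c * L) from mul_one_div μ (c * L)]
  set r := Real.sqrt (μ / (c * L)) with hrdef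
  have hr0 : 0 ≤ r := Real.sqrt_nonneg _
  have harg : μ / (c * L) ≤ 1 / 4 := by
    rw [div_le_div_iff₀ hcL (by norm_num)]
    nlinarith
  have hr : r ≤ 1 / 2 := by
    have h := Real.sqrt_le_sqrt harg
    rwa [show (1:ℝ)/4 = (1/2)^2 by norm_num, Real.sqrt_sq (by norm_num)] at h
  have h1mr : (0:ℝ) < 1 - r := by linarith
  have hD : 0 ≤ f xk - f xs := by
    have := isMinOn_iff.mp hmin xk (mem_univ xk); linarith
  have hg2 : ‖g xk‖ ^ 2 ≤ 2 * L * (f xk - f xs) :=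
    grad_sq_aux f g L hL hgrad hLip xs hmin xk
  set D := f xk - f xs with hDdef
  set N1 := ‖vk‖ ^ 2 with hN1
  set N2 := ‖vk + (2 * Real.sqrt μ / (1 - r)) • (xk - xs)
      + (β * Real.sqrt (1 / (c * L))) • g xk‖ ^ 2 with hN2
  have hN1p : 0 ≤ N1 := sq_nonneg _
  have hN2p : 0 ≤ N2 := sq_nonneg _
  have key : β * (1 / (c * L)) * ‖g xk‖ ^ 2 / (2 * (1 - r)) ≤ β / (c * (1 - r)) * D := by
    have hb : β * ‖g xk‖ ^ 2 ≤ β * (2 * L * D) := mul_le_mul_of_nonneg_left hg2 hβ0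
    have step : β * (1 / (c * L)) * ‖g xk‖ ^ 2 / (2 * (1 - r))
        = (β * ‖g xk‖ ^ 2) * (1 / (c * L) / (2 * (1 - r))) := by ring
    have step2 : (β * (2 * L * D)) * (1 / (c * L) / (2 * (1 - r)))
        = β / (c * (1 - r)) * D := by
      field_simp
    rw [step, ← step2]
    exact mul_le_mul_of_nonneg_right hb (by positivity)
  have h1 : (1 + r) / (1 - r) * D + 1 / 4 * N1 + 1 / 4 * N2
      - β * (1 / (c * L)) * ‖g xk‖ ^ 2 / (2 * (1 - r))
      ≥ ((1 + r) / (1 - r) - β / (c * (1 - r))) * D := by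
    rw [sub_mul]
    linarith
  refine ⟨h1, ?_⟩
  have hden : 0 < c + c * r - β := by nlinarith
  have hAB : (1 + r) / (1 - r) - β / (c * (1 - r)) = (c + c * r - β) / (c * (1 - r)) := by
    field_simp
  set E := (1 + r) / (1 - r) * D + 1 / 4 * N1 + 1 / 4 * N2
      - β * (1 / (c * L)) * ‖g xk‖ ^ 2 / (2 * (1 - r)) with hEdef
  have h1' : (c + c * r - β) / (c * (1 - r)) * D ≤ E := by
    rw [← hAB]; exact h1
  have hc1mr : (0:ℝ) < c * (1 - r) := by positivity
  have h2 := mul_le_mul_of_nonneg_left h1' hc1mr.le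
  have h3 : c * (1 - r) * ((c + c * r - β) / (c * (1 - r)) * D) = (c + c * r - β) * D := by
    field_simp
  rw [h3] at h2
  rw [div_mul_eq_mul_div, le_div_iff₀ hden]
  nlinarith [h2]
end
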